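/- arXiv:2510.14473 — 9 statements merged into one kernel-verified Lean document; each statement's English description precedes it below -/
import Mathlib

section
/- Let N be cyclic of order p^e with p an odd prime, σ a generator, and let a ≡ 1 (mod p). Then in Hol(N), for any integer u, the order of the element (σ^u, φ_a) equals max{p^{e - v_p(u)}, ord(φ_a)}, where φ_a is the automorphism σ ↦ σ^a and v_p is the p-adic valuation (with the convention p^{e-v_p(u)} = 1 if p^e divides u). -/
open Finset

private lemma S_split (a : ℤ) (c d : ℕ) :
    ∑ i ∈ range (c * d), a ^ i =
      (∑ i ∈ range c, a ^ i) * ∑ j ∈ range d, (a ^ c) ^ j := by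
  induction d with
  | zero => simp
  | succ d ih =>
    rw [Nat.mul_succ, Finset.sum_range_add, ih, Finset.sum_range_succ]
    have h1 : ∑ x ∈ range c, a ^ (c * d + x) = a ^ (c * d) * ∑ x ∈ range c, a ^ x := by
      rw [Finset.mul_sum]; exact Finset.sum_congr rfl fun x _ => (pow_add a (c*d) x)
    rw [h1, ← pow_mul]
    ring

private lemma S_sub_card (p : ℕ) (a : ℤ) (ha : (p : ℤ) ∣ a - 1) (n : ℕ) :
    (p : ℤ) ∣ (∑ i ∈ range n, a ^ i) - n := by
  have : (∑ i ∈ range n, a ^ i) - n = ∑ i ∈ range n, (a ^ i - 1) := by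
    rw [Finset.sum_sub_distrib]; simp
  rw [this]
  refine Finset.dvd_sum fun i _ => ha.trans ?_
  exact ⟨∑ j ∈ range i, a ^ j, by rw [mul_comm]; exact (geom_sum_mul a i).symm⟩

private lemma dvd_geom_sub_one {p : ℕ} (a : ℤ) (ha : (p : ℤ) ∣ a - 1) (i : ℕ) :
    (p : ℤ) ∣ a ^ i - 1 :=
  ha.trans ⟨∑ j ∈ range i, a ^ j, by rw [mul_comm]; exact (geom_sum_mul a i).symm⟩

private lemma Sp_key (p : ℕ) (hodd : Odd p) (a : ℤ) (ha : (p : ℤ) ∣ a - 1) :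
    ((p : ℤ))^2 ∣ (∑ i ∈ range p, a ^ i) - p := by
  have hexp : (∑ i ∈ range p, a ^ i) - p = (a - 1) * ∑ i ∈ range p, ∑ j ∈ range i, a ^ j := by
    rw [Finset.mul_sum]
    have : (∑ i ∈ range p, a ^ i) - p = ∑ i ∈ range p, (a ^ i - 1) := by
      rw [Finset.sum_sub_distrib]; simp
    rw [this]
    refine Finset.sum_congr rfl fun i _ => ?_
    rw [mul_comm]
    exact (geom_sum_mul a i).symm
  rw [hexp, sq]
  refine mul_dvd_mul ha ?_
  have h1 : (p : ℤ) ∣ (∑ i ∈ range p, ∑ j ∈ range i, a ^ j) - ∑ i ∈ range p, (i : ℤ) := by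
    rw [← Finset.sum_sub_distrib]
    exact Finset.dvd_sum fun i _ => S_sub_card p a ha i
  have h2 : (p : ℤ) ∣ ∑ i ∈ range p, (i : ℤ) := by
    obtain ⟨k, hk⟩ := hodd
    subst hk
    have hnat : (∑ i ∈ range (2 * k + 1), i) = (2 * k + 1) * k := by
      have h := Finset.sum_range_id_mul_two (2 * k + 1)
      have : (2 * k + 1) * k * 2 = (2 * k + 1) * (2 * k + 1 - 1) := by
        rw [Nat.add_sub_cancel]; ring
      omega
    have : (∑ i ∈ range (2 * k + 1), (i : ℤ)) = ((2 * k + 1 : ℕ) : ℤ) * k := by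
      rw [← Nat.cast_sum]
      rw [hnat]
      push_cast
      ring
    exact ⟨k, this⟩
  have := dvd_add h1 h2
  simpa using this

private lemma S_dvd_iff (p : ℕ) (hp : p.Prime) (hodd : Odd p) :
    ∀ (m : ℕ) (a : ℤ), (p : ℤ) ∣ a - 1 → ∀ n : ℕ, n ≠ 0 →
      ((p : ℤ) ^ m ∣ ∑ i ∈ range n, a ^ i ↔ p ^ m ∣ n) := by
  intro m
  induction m with
  | zero => intro a _ n _; simp
  | succ m ih =>
    intro a ha n hn
    have hpI : Prime (p : ℤ) := Nat.prime_iff_prime_int.mp hp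
    have hap : (p : ℤ) ∣ a ^ p - 1 := dvd_geom_sub_one a ha p
    have hpd : (p : ℤ) ∣ (p : ℤ) ^ (m + 1) := dvd_pow_self _ (Nat.succ_ne_zero m)
    have hpdvdSp : (p : ℤ) ∣ ∑ i ∈ range p, a ^ i := by
      have := S_sub_card p a ha p
      exact (dvd_sub_right (dvd_refl _)).mp (by simpa using this.add (dvd_refl (p:ℤ)))
    constructor
    · intro h
      have hp1 : (p : ℤ) ∣ ∑ i ∈ range n, a ^ i := hpd.trans h
      have hpn : (p : ℤ) ∣ (n : ℤ) := by
        have h2 := S_sub_card p a ha n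
        have := hp1.sub h2
        simpa using this
      have hpn' : p ∣ n := Int.ofNat_dvd.mp (by exact_mod_cast hpn)
      obtain ⟨t, ht⟩ := hpn'
      have ht0 : t ≠ 0 := by rintro rfl; exact hn (by simp [ht])
      have hsplit := S_split a p t
      rw [← ht] at hsplit
      rw [hsplit] at h
      obtain ⟨s, hs⟩ := Sp_key p hodd a ha
      have hSp : (∑ i ∈ range p, a ^ i) = (p : ℤ) * (1 + p * s) := by
        rw [sq] at hs; linarith
      rw [hSp] at h
      have h2 : (p : ℤ) ^ m ∣ (1 + p * s) * ∑ j ∈ range t, (a ^ p) ^ j := by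
        have h' : (p:ℤ) * ((p:ℤ) ^ m) ∣ (p:ℤ) * ((1 + p * s) * ∑ j ∈ range t, (a ^ p) ^ j) := by
          have e1 : (p:ℤ) * ((p:ℤ) ^ m) = (p:ℤ) ^ (m+1) := by ring
          have e2 : (p:ℤ) * ((1 + p * s) * ∑ j ∈ range t, (a ^ p) ^ j)
              = (p:ℤ) * (1 + p * s) * ∑ j ∈ range t, (a ^ p) ^ j := by ring
          rw [e1, e2]; exact h
        exact (mul_dvd_mul_iff_left (by exact_mod_cast hp.ne_zero : (p:ℤ) ≠ 0)).mp h'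
      have hcop : IsCoprime ((p : ℤ) ^ m) (1 + p * s) := by
        apply IsCoprime.pow_left
        rw [hpI.coprime_iff_not_dvd]
        intro hd
        have h1 : (p : ℤ) ∣ 1 := by
          have : (p:ℤ) ∣ (1 + p * s) - p * s := hd.sub ⟨s, rfl⟩
          simpa using this
        exact hpI.not_dvd_one h1
      have h3 : (p : ℤ) ^ m ∣ ∑ j ∈ range t, (a ^ p) ^ j := hcop.dvd_of_dvd_mul_left h2
      have h4 : p ^ m ∣ t := (ih (a ^ p) hap t ht0).mp h3
      rw [ht, pow_succ, mul_comm (p ^ m) p]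
      exact mul_dvd_mul_left p h4
    · intro h
      have hpn' : p ∣ n := (dvd_pow_self p (Nat.succ_ne_zero m)).trans h
      obtain ⟨t, ht⟩ := hpn'
      have ht0 : t ≠ 0 := by rintro rfl; exact hn (by simp [ht])
      have h4 : p ^ m ∣ t := by
        have : p * p ^ m ∣ p * t := by
          rw [← pow_succ']; rwa [← ht]
        exact (Nat.mul_dvd_mul_iff_left hp.pos).mp this
      have h3 : (p : ℤ) ^ m ∣ ∑ j ∈ range t, (a ^ p) ^ j := (ih (a ^ p) hap t ht0).mpr h4
      have hsplit := S_split a p t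
      rw [← ht] at hsplit
      rw [hsplit, pow_succ, mul_comm ((p:ℤ) ^ m) (p:ℤ)]
      exact mul_dvd_mul hpdvdSp h3

private lemma pow_lift (p : ℕ) (hp : p.Prime) (hodd : Odd p) (e : ℕ) (he : 1 ≤ e)
    (a : ℤ) (ha : (p : ℤ) ∣ a - 1) : (p : ℤ) ^ e ∣ a ^ p ^ (e - 1) - 1 := by
  have hS : (p : ℤ) ^ (e - 1) ∣ ∑ i ∈ range (p ^ (e - 1)), a ^ i :=
    (S_dvd_iff p hp hodd (e - 1) a ha (p ^ (e - 1)) (pow_ne_zero _ hp.ne_zero)).mpr dvd_rfl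
  have := mul_dvd_mul hS ha
  rw [geom_sum_mul] at this
  calc (p : ℤ) ^ e = (p : ℤ) ^ (e - 1) * (p : ℤ) := by
        rw [← pow_succ]; congr 1; omega
    _ ∣ a ^ p ^ (e - 1) - 1 := this

/-- The holomorph `Hol(N) = N ⋊ Aut(N)`. -/
abbrev Hol (N : Type*) [Group N] : Type _ :=
  N ⋊[MonoidHom.id (MulAut N)] MulAut N

/-- Let `N` be cyclic of order `p^e` (`p` odd prime), `σ` a
generator, `a ≡ 1 (mod p)`. For any integer `u`, the order of `(σ^u, φ_a)` in
`Hol(N)` equals `max (p^{e - v_p(u)}) (ord φ_a)`, with the convention that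
`p^{e - v_p(u)} = 1` if `p^e ∣ u`. -/
theorem hol_order_formula_odd {N : Type*} [Group N] (p e : ℕ) (hp : p.Prime)
    (hodd : Odd p) (he : 1 ≤ e)
    (σ : N) (hgen : ∀ x : N, x ∈ Subgroup.zpowers σ) (hcard : Nat.card N = p ^ e)
    (a : ℤ) (ha : Int.ModEq (p : ℤ) a 1)
    (φa : MulAut N) (hφa : φa σ = σ ^ a) (u : ℤ) :
    orderOf (⟨σ ^ u, φa⟩ : Hol N) =
      max (if (p : ℤ) ^ e ∣ u then 1 else p ^ (e - padicValInt p u))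
        (orderOf φa) := by
  classical
  haveI : Fact p.Prime := ⟨hp⟩
  have ha' : (p : ℤ) ∣ a - 1 := Int.ModEq.dvd ha.symm
  -- order of σ
  have hordσ : orderOf σ = p ^ e := by
    have h1 : Subgroup.zpowers σ = ⊤ := by
      rw [Subgroup.eq_top_iff']; exact hgen
    rw [← Nat.card_zpowers, h1, Subgroup.card_top, hcard]
  have hσ1 : ∀ m : ℤ, σ ^ m = 1 ↔ ((p : ℤ) ^ e ∣ m) := by
    intro m
    rw [← orderOf_dvd_iff_zpow_eq_one, hordσ]
    push_cast
    rfl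
  -- φa action on powers of σ
  have hφ : ∀ m : ℤ, φa (σ ^ m) = σ ^ (a * m) := by
    intro m
    rw [map_zpow, hφa, ← zpow_mul]
  have hφn : ∀ n : ℕ, (φa ^ n) σ = σ ^ (a ^ n : ℤ) := by
    intro n
    induction n with
    | zero => simp
    | succ n ihn =>
      rw [pow_succ, MulAut.mul_apply, hφa, map_zpow, ihn, ← zpow_mul, pow_succ]
  have hφpow : ∀ (n : ℕ) (m : ℤ), (φa ^ n) (σ ^ m) = σ ^ ((a ^ n : ℤ) * m) := by
    intro n m
    rw [map_zpow, hφn, ← zpow_mul]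
  have hφeq : ∀ n : ℕ, (φa ^ n = 1 ↔ (p : ℤ) ^ e ∣ a ^ n - 1) := by
    intro n
    constructor
    · intro h
      have := hφn n
      rw [h] at this
      have h2 : σ ^ ((a ^ n : ℤ) - 1) = 1 := by
        rw [zpow_sub, ← this]
        simp
      rwa [hσ1] at h2
    · intro h
      ext x
      obtain ⟨m, rfl⟩ := hgen x
      rw [hφpow]
      show σ ^ ((a ^ n : ℤ) * m) = σ ^ m
      have : σ ^ ((a ^ n : ℤ) * m - m) = 1 := by
        rw [hσ1]
        exact (h.mul_right m).trans (dvd_of_eq (by ring))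
      rw [zpow_sub, mul_inv_eq_one] at this
      exact this
  -- power formula in Hol N
  set g : Hol N := ⟨σ ^ u, φa⟩ with hg_def
  have hgpow : ∀ n : ℕ, g ^ n = (⟨σ ^ (u * ∑ i ∈ range n, (a : ℤ) ^ i), φa ^ n⟩ : Hol N) := by
    intro n
    induction n with
    | zero => simp [hg_def]
    | succ n ihn =>
      rw [pow_succ, ihn]
      refine SemidirectProduct.ext ?_ ?_
      · show σ ^ (u * ∑ i ∈ range n, (a:ℤ) ^ i) * (φa ^ n) (σ ^ u)
          = σ ^ (u * ∑ i ∈ range (n+1), (a:ℤ) ^ i)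
        rw [hφpow, ← zpow_add, Finset.sum_range_succ]
        congr 1
        ring
      · show φa ^ n * φa = φa ^ (n + 1)
        rw [pow_succ]
  have hone : ∀ n : ℕ, (g ^ n = 1 ↔
      ((p : ℤ) ^ e ∣ u * ∑ i ∈ range n, (a : ℤ) ^ i ∧ φa ^ n = 1)) := by
    intro n
    rw [hgpow n, SemidirectProduct.ext_iff]
    simp only [SemidirectProduct.one_left, SemidirectProduct.one_right]
    rw [hσ1]
  -- facts about D = orderOf φa
  set D := orderOf φa with hD_def
  have hDdvd : D ∣ p ^ (e - 1) :=
    orderOf_dvd_of_pow_eq_one ((hφeq _).mpr (pow_lift p hp hodd e he a ha'))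
  obtain ⟨k, hk_le, hk⟩ := (Nat.dvd_prime_pow hp).mp hDdvd
  have hD0 : D ≠ 0 := by rw [hk]; exact pow_ne_zero _ hp.ne_zero
  by_cases hcase : (p : ℤ) ^ e ∣ u
  · rw [if_pos hcase, max_eq_right (Nat.one_le_iff_ne_zero.mpr hD0)]
    apply Nat.dvd_antisymm
    · rw [orderOf_dvd_iff_pow_eq_one, hone]
      exact ⟨Dvd.dvd.mul_right hcase _, pow_orderOf_eq_one φa⟩
    · exact orderOf_dvd_of_pow_eq_one ((hone _).mp (pow_orderOf_eq_one g)).2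
  · rw [if_neg hcase]
    set v := padicValInt p u with hv_def
    have hu0 : u ≠ 0 := by rintro rfl; exact hcase (dvd_zero _)
    have hve : v < e := by
      by_contra hle
      exact hcase ((padicValInt_dvd_iff e u).mpr (Or.inr (by omega)))
    have hpv : (p : ℤ) ^ v ∣ u := padicValInt_dvd u
    obtain ⟨u', hu'⟩ := hpv
    have hu'p : ¬ (p : ℤ) ∣ u' := by
      intro hd
      have : (p : ℤ) ^ (v + 1) ∣ u := by
        obtain ⟨w, hw⟩ := hd
        exact ⟨w, by rw [hu', hw]; ring⟩
      rcases (padicValInt_dvd_iff (v + 1) u).mp this with h0 | hle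
      · exact hu0 h0
      · omega
    have hu'0 : u' ≠ 0 := by rintro rfl; exact hu0 (by simpa using hu')
    -- key divisibility equivalence
    have hPn : ∀ n : ℕ, n ≠ 0 →
        ((p : ℤ) ^ e ∣ u * ∑ i ∈ range n, (a : ℤ) ^ i ↔ p ^ (e - v) ∣ n) := by
      intro n hn
      rw [← S_dvd_iff p hp hodd (e - v) a ha' n hn]
      have hpI : Prime (p : ℤ) := Nat.prime_iff_prime_int.mp hp
      have hcop : IsCoprime ((p : ℤ) ^ (e - v)) u' := by
        apply IsCoprime.pow_left
        rwa [hpI.coprime_iff_not_dvd]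
      constructor
      · intro h
        have h1 : (p : ℤ) ^ v * (p : ℤ) ^ (e - v) ∣ (p : ℤ) ^ v * (u' * ∑ i ∈ range n, (a:ℤ) ^ i) := by
          have e1 : (p:ℤ) ^ v * (p:ℤ) ^ (e - v) = (p:ℤ) ^ e := by
            rw [← pow_add]; congr 1; omega
          have e2 : (p:ℤ) ^ v * (u' * ∑ i ∈ range n, (a:ℤ) ^ i)
              = u * ∑ i ∈ range n, (a:ℤ) ^ i := by rw [hu']; ring
          rw [e1, e2]; exact h
        have h2 := (mul_dvd_mul_iff_left
          (pow_ne_zero v (by exact_mod_cast hp.ne_zero : (p:ℤ) ≠ 0))).mp h1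
        exact hcop.dvd_of_dvd_mul_left h2
      · intro h
        have e1 : (p:ℤ) ^ e = (p:ℤ) ^ v * (p:ℤ) ^ (e - v) := by
          rw [← pow_add]; congr 1; omega
        rw [e1, hu']
        have := mul_dvd_mul (dvd_refl ((p:ℤ) ^ v)) (h.mul_left u')
        calc (p:ℤ) ^ v * (p:ℤ) ^ (e - v) ∣ (p:ℤ) ^ v * (u' * ∑ i ∈ range n, (a:ℤ) ^ i) := by
              exact mul_dvd_mul (dvd_refl _) (h.mul_left u')
          _ = (p:ℤ) ^ v * u' * ∑ i ∈ range n, (a:ℤ) ^ i := by ring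
    -- M = max P D is a p-power max
    have hM : max (p ^ (e - v)) D = p ^ (max (e - v) k) := by
      rw [hk]
      rcases le_total (e - v) k with hle | hle
      · rw [max_eq_right (Nat.pow_le_pow_right hp.one_lt.le hle), max_eq_right hle]
      · rw [max_eq_left (Nat.pow_le_pow_right hp.one_lt.le hle), max_eq_left hle]
    have hM0 : max (p ^ (e - v)) D ≠ 0 := by
      rw [hM]; exact pow_ne_zero _ hp.ne_zero
    have hgM : g ^ (max (p ^ (e - v)) D) = 1 := by
      rw [hone, hPn _ hM0]
      constructor
      · rw [hM]; exact pow_dvd_pow p (le_max_left _ _)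
      · rw [← orderOf_dvd_iff_pow_eq_one, hM, ← hD_def, hk]
        exact pow_dvd_pow p (le_max_right _ _)
    apply Nat.dvd_antisymm
    · exact orderOf_dvd_of_pow_eq_one hgM
    · have hog0 : orderOf g ≠ 0 := by
        intro h0
        have := orderOf_dvd_of_pow_eq_one hgM
        rw [h0] at this
        exact hM0 (Nat.eq_zero_of_zero_dvd this)
      obtain ⟨h1, h2⟩ := (hone (orderOf g)).mp (pow_orderOf_eq_one g)
      have hP : p ^ (e - v) ∣ orderOf g := (hPn _ hog0).mp h1
      have hD : D ∣ orderOf g := orderOf_dvd_of_pow_eq_one h2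
      rcases max_choice (p ^ (e - v)) D with hmx | hmx <;> rw [hmx]
      · exact hP
      · exact hD
end

section
/- Let N be cyclic of order 2^e (e ≥ 2) with generator σ, and let a ≡ 1 (mod 4). Then in Hol(N), for any integer u, the order of (σ^u, φ_a) equals max{2^{e - v_2(u)}, ord(φ_a)}. -/
/-!
Write `g = (σ^u, φ_a)`. Since `φ_a^i σ = σ^(a^i)`, one gets `g^k = (σ^(u S_k), φ_a^k)` with
`S_k = 1 + a + ⋯ + a^(k-1)`. For `a ≡ 1 (mod 4)` the lifting-the-exponent lemma gives
`v₂(S_k) = v₂(k)`, so `σ^(u S_k) = 1` exactly when the order `2^(e - v₂(u))` of `σ^u` divides `k`.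
Hence `ord g = lcm(ord σ^u, ord φ_a)`, and as both orders are powers of two (`|Aut N| = φ(2^e)` divides `2^e`),
the lcm is the maximum.
-/

/-- LTE at `p = 2` for `a ^ k - 1 = (∑_{i<k} a ^ i) (a - 1)`, after cancelling the factor `a - 1`. -/
theorem Int.emultiplicity_two_geom_sum {a : ℤ} (ha : a ≡ 1 [ZMOD 4]) (k : ℕ) :
    emultiplicity 2 (∑ i ∈ Finset.range k, a ^ i) = emultiplicity 2 (k : ℤ) := by
  rcases eq_or_ne a 1 with rfl | ha1
  · simp
  have h4 : (4 : ℤ) ∣ a - 1 := ha.symm.dvd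
  have hfin : emultiplicity (2 : ℤ) (a - 1) ≠ ⊤ :=
    (emultiplicity_lt_top.2 (Int.finiteMultiplicity_iff.2 ⟨by decide, sub_ne_zero.2 ha1⟩)).ne
  have lte := Int.two_pow_sub_pow' k h4 (by omega)
  rw [one_pow, ← geom_sum_mul, emultiplicity_mul Int.prime_two, add_comm] at lte
  exact WithTop.add_left_cancel hfin lte

theorem Int.two_pow_dvd_geom_sum_iff {a : ℤ} (ha : a ≡ 1 [ZMOD 4]) (t k : ℕ) :
    2 ^ t ∣ ∑ i ∈ Finset.range k, a ^ i ↔ 2 ^ t ∣ (k : ℤ) := by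
  rw [pow_dvd_iff_le_emultiplicity, pow_dvd_iff_le_emultiplicity,
    Int.emultiplicity_two_geom_sum ha]

theorem Int.prime_pow_dvd_mul_iff {p e : ℕ} [hp : Fact p.Prime] {u : ℤ} (hu : ¬(p : ℤ) ^ e ∣ u)
    (k : ℤ) : (p : ℤ) ^ e ∣ u * k ↔ (p : ℤ) ^ (e - padicValInt p u) ∣ k := by
  set v := padicValInt p u
  have hu0 : u ≠ 0 := by rintro rfl; exact hu (dvd_zero _)
  have hve : v < e := by
    by_contra! h
    exact hu ((pow_dvd_pow _ h).trans (padicValInt_dvd u))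
  obtain ⟨w, hw⟩ : (p : ℤ) ^ v ∣ u := padicValInt_dvd u
  have hpw : ¬(p : ℤ) ∣ w := by
    rintro ⟨c, rfl⟩
    have := (padicValInt_dvd_iff (v + 1) u).1 ⟨c, by rw [hw]; ring⟩
    omega
  have hcop : IsCoprime ((p : ℤ) ^ (e - v)) w :=
    ((Prime.coprime_iff_not_dvd (Nat.prime_iff_prime_int.1 hp.out)).2 hpw).pow_left
  rw [hw, ← Nat.add_sub_cancel' hve.le, pow_add, Nat.add_sub_cancel_left, mul_assoc,
    mul_dvd_mul_iff_left (pow_ne_zero _ (by exact_mod_cast hp.out.ne_zero))]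
  exact ⟨hcop.dvd_of_dvd_mul_left, fun h => h.mul_left w⟩

theorem orderOf_eq_of_forall_pow_eq_one_iff {G : Type*} [Monoid G] {x : G} {n : ℕ}
    (h : ∀ k : ℕ, x ^ k = 1 ↔ n ∣ k) : orderOf x = n :=
  Nat.dvd_antisymm (orderOf_dvd_of_pow_eq_one ((h _).2 dvd_rfl)) ((h _).1 (pow_orderOf_eq_one x))

theorem orderOf_zpow_of_orderOf_eq_prime_pow {G : Type*} [Group G] {σ : G} {p e : ℕ}
    [Fact p.Prime] (hσ : orderOf σ = p ^ e) (u : ℤ) :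
    orderOf (σ ^ u) = if (p : ℤ) ^ e ∣ u then 1 else p ^ (e - padicValInt p u) := by
  split_ifs with hu
  · rw [orderOf_eq_one_iff, ← orderOf_dvd_iff_zpow_eq_one, hσ]
    exact_mod_cast hu
  · refine orderOf_eq_of_forall_pow_eq_one_iff fun k => ?_
    rw [← zpow_natCast, ← zpow_mul, ← orderOf_dvd_iff_zpow_eq_one, hσ, Nat.cast_pow,
      Int.prime_pow_dvd_mul_iff hu]
    norm_cast

theorem Nat.lcm_eq_max_of_dvd_prime_pow {p a b m n : ℕ} (hp : p.Prime) (ha : a ∣ p ^ m)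
    (hb : b ∣ p ^ n) : Nat.lcm a b = max a b := by
  obtain ⟨i, -, rfl⟩ := (Nat.dvd_prime_pow hp).1 ha
  obtain ⟨j, -, rfl⟩ := (Nat.dvd_prime_pow hp).1 hb
  rcases le_total i j with hij | hji
  · rw [Nat.lcm_eq_right (pow_dvd_pow p hij), max_eq_right (Nat.pow_le_pow_right hp.pos hij)]
  · rw [Nat.lcm_eq_left (pow_dvd_pow p hji), max_eq_left (Nat.pow_le_pow_right hp.pos hji)]

theorem MulAut.pow_apply_of_apply_eq_zpow {N : Type*} [Group N] {σ : N} {φ : MulAut N} {a : ℤ}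
    (hφ : φ σ = σ ^ a) (k : ℕ) : (φ ^ k) σ = σ ^ (a ^ k) := by
  induction k with
  | zero => simp
  | succ k ih => rw [pow_succ, MulAut.mul_apply, hφ, map_zpow, ih, ← zpow_mul, pow_succ]

namespace Hol

variable {N : Type*} [Group N] {σ : N} {φ : MulAut N} {a : ℤ}

theorem mk_zpow_pow (hφ : φ σ = σ ^ a) (u : ℤ) (k : ℕ) :
    (⟨σ ^ u, φ⟩ : Hol N) ^ k = ⟨σ ^ (u * ∑ i ∈ Finset.range k, a ^ i), φ ^ k⟩ := by
  induction k with
  | zero => ext <;> simp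
  | succ k ih =>
    rw [pow_succ, ih]
    refine SemidirectProduct.ext ?_ (pow_succ φ k).symm
    simp only [SemidirectProduct.mul_left, MonoidHom.id_apply, map_zpow,
      MulAut.pow_apply_of_apply_eq_zpow hφ, ← zpow_mul, ← zpow_add, Finset.sum_range_succ]
    ring_nf

theorem orderOf_mk_zpow (ha : a ≡ 1 [ZMOD 4]) (hφ : φ σ = σ ^ a) {e : ℕ}
    (hσ : orderOf σ ∣ 2 ^ e) (u : ℤ) :
    orderOf (⟨σ ^ u, φ⟩ : Hol N) = Nat.lcm (orderOf (σ ^ u)) (orderOf φ) := by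
  obtain ⟨t, -, ht⟩ := (Nat.dvd_prime_pow Nat.prime_two).1
    ((orderOf_dvd_of_mem_zpowers (Subgroup.zpow_mem_zpowers σ u)).trans hσ)
  refine orderOf_eq_of_forall_pow_eq_one_iff fun k => ?_
  rw [mk_zpow_pow hφ, SemidirectProduct.ext_iff, SemidirectProduct.one_left,
    SemidirectProduct.one_right, Nat.lcm_dvd_iff, zpow_mul,
    ← orderOf_dvd_iff_zpow_eq_one, ← orderOf_dvd_iff_pow_eq_one, ht]
  push_cast
  rw [Int.two_pow_dvd_geom_sum_iff ha]
  norm_cast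

end Hol

theorem hol_order_formula_two_general {N : Type*} [Group N] (e : ℕ)
    (σ : N) (hgen : ∀ x : N, x ∈ Subgroup.zpowers σ) (hcard : Nat.card N = 2 ^ e)
    (a : ℤ) (ha : Int.ModEq 4 a 1)
    (φa : MulAut N) (hφa : φa σ = σ ^ a) (u : ℤ) :
    orderOf (⟨σ ^ u, φa⟩ : Hol N) =
      max (if (2 : ℤ) ^ e ∣ u then 1 else 2 ^ (e - padicValInt 2 u))
        (orderOf φa) := by
  have hσ : orderOf σ = 2 ^ e := by rw [orderOf_eq_card_of_forall_mem_zpowers hgen, hcard]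
  have : IsCyclic N := ⟨σ, hgen⟩
  have : Finite N := Nat.finite_of_card_ne_zero (by simp [hcard])
  have hφ : orderOf φa ∣ 2 ^ e := calc
    orderOf φa ∣ Nat.card (MulAut N) := orderOf_dvd_natCard φa
    _ = Nat.totient (2 ^ e) := by rw [IsCyclic.card_mulAut, hcard]
    _ ∣ Nat.totient (2 ^ (e + 1)) := Nat.totient_dvd_of_dvd (pow_dvd_pow 2 e.le_succ)
    _ = 2 ^ e := by simp [Nat.totient_prime_pow_succ Nat.prime_two]
  rw [Hol.orderOf_mk_zpow ha hφa hσ.dvd, Nat.lcm_eq_max_of_dvd_prime_pow Nat.prime_two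
    ((orderOf_dvd_of_mem_zpowers (Subgroup.zpow_mem_zpowers σ u)).trans hσ.dvd) hφ,
    orderOf_zpow_of_orderOf_eq_prime_pow hσ, Nat.cast_ofNat]

/-- Let `N` be cyclic of order `2^e` (`e ≥ 2`) with generator `σ`,
and let `a ≡ 1 (mod 4)`. For any integer `u`, the order of `(σ^u, φ_a)` in
`Hol(N)` equals `max (2^{e - v_2(u)}) (ord φ_a)`, with the convention that
`2^{e - v_2(u)} = 1` when `2^e ∣ u`. -/
theorem hol_order_formula_two {N : Type*} [Group N] (e : ℕ) (he : 2 ≤ e)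
    (σ : N) (hgen : ∀ x : N, x ∈ Subgroup.zpowers σ) (hcard : Nat.card N = 2 ^ e)
    (a : ℤ) (ha : Int.ModEq 4 a 1)
    (φa : MulAut N) (hφa : φa σ = σ ^ a) (u : ℤ) :
    orderOf (⟨σ ^ u, φa⟩ : Hol N) =
      max (if (2 : ℤ) ^ e ∣ u then 1 else 2 ^ (e - padicValInt 2 u))
        (orderOf φa) :=
  hol_order_formula_two_general e σ hgen hcard a ha φa hφa u
end

section
/- Let N be a finite group whose holomorph Hol(N) contains a unique Hall π-subgroup Q, where π is the set of prime divisors of |N|. If G is a transitive subgroup of Hol(N) (acting on N with the natural action), then G ∩ Q is also a transitive subgroup. -/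
/-- The natural action of `Hol(N)` on `N`: `(n, φ) • x = n · φ(x)`. -/
def holAct {N : Type*} [Group N] (g : Hol N) (x : N) : N :=
  g.left * g.right x

/-- A subgroup of `Hol(N)` is transitive if its natural action on `N` is transitive. -/
def IsTransitiveSub {N : Type*} [Group N] (G : Subgroup (Hol N)) : Prop :=
  ∀ x y : N, ∃ g ∈ G, holAct g x = y

/-- `Q` is a Hall `π`-subgroup of `Hol(N)`, where `π` is the set of prime
divisors of `|N|`: every prime factor of `|Q|` divides `|N|` and no prime
factor of `[Hol(N) : Q]` divides `|N|`. -/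
def IsHallPi {N : Type*} [Group N] (Q : Subgroup (Hol N)) : Prop :=
  (∀ q : ℕ, q.Prime → q ∣ Nat.card Q → q ∣ Nat.card N) ∧
    (∀ q : ℕ, q.Prime → q ∣ Q.index → ¬ q ∣ Nat.card N)

instance holFinite {N : Type*} [Group N] [Finite N] : Finite (Hol N) :=
  Finite.of_injective (fun g => (g.left, g.right)) (by
    intro a b h
    cases a; cases b; simp_all)

instance holMulAction {N : Type*} [Group N] : MulAction (Hol N) N where
  smul := holAct
  one_smul x := by
    show holAct 1 x = x
    simp [holAct]
  mul_smul g h x := by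
    show holAct (g * h) x = holAct g (holAct h x)
    simp [holAct, SemidirectProduct.mul_left, SemidirectProduct.mul_right, mul_assoc]

theorem holAct_eq_smul {N : Type*} [Group N] (g : Hol N) (x : N) : holAct g x = g • x := rfl

/-- The image of a Hall π-subgroup under an automorphism is Hall π. -/
theorem isHallPi_map {N : Type*} [Group N] (Q : Subgroup (Hol N)) (hQ : IsHallPi Q)
    (e : Hol N ≃* Hol N) : IsHallPi (Q.map e.toMonoidHom) := by
  have hcard : Nat.card (Q.map e.toMonoidHom) = Nat.card Q :=
    (Nat.card_congr (Q.equivMapOfInjective e.toMonoidHom e.injective).toEquiv).symm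
  have hidx : (Q.map e.toMonoidHom).index = Q.index :=
    Subgroup.index_map_eq Q e.surjective (by rw [(MonoidHom.ker_eq_bot_iff _).mpr e.injective]; exact bot_le)
  exact ⟨fun q hq hdvd => hQ.1 q hq (hcard ▸ hdvd),
    fun q hq hdvd => hQ.2 q hq (hidx ▸ hdvd)⟩


/-- Let `N` be a finite group whose holomorph contains a unique
Hall `π`-subgroup `Q`, where `π` is the set of primes dividing `|N|`. If `G` is a
transitive subgroup of `Hol(N)`, then `G ⊓ Q` is also transitive. -/
theorem inf_hall_transitive {N : Type*} [Group N] [Finite N]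
    (Q : Subgroup (Hol N)) (hQ : IsHallPi Q)
    (huniq : ∀ Q' : Subgroup (Hol N), IsHallPi Q' → Q' = Q)
    (G : Subgroup (Hol N)) (hG : IsTransitiveSub G) :
    IsTransitiveSub (G ⊓ Q) := by
  classical
  -- Q is normal in Hol N, by uniqueness
  have hQnorm : Q.Normal := by
    constructor
    intro n hn g
    have key : Q.map (MulAut.conj g).toMonoidHom = Q :=
      huniq _ (isHallPi_map Q hQ (MulAut.conj g))
    rw [← key]
    exact ⟨n, hn, rfl⟩
  haveI := hQnorm
  intro x y
  set K : Subgroup (Hol N) := G ⊓ Q with hK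
  -- the subgroup of G of elements g with g • x in the K-orbit of x
  set H : Subgroup G :=
    { carrier := {g : G | ∃ k ∈ K, k • x = (g : Hol N) • x}
      one_mem' := ⟨1, K.one_mem, by simp⟩
      mul_mem' := by
        rintro g h ⟨kg, hkg, hkgx⟩ ⟨kh, hkh, hkhx⟩
        refine ⟨(g : Hol N) * kh * (g : Hol N)⁻¹ * kg, ?_, ?_⟩
        · exact K.mul_mem (by
            refine ⟨G.mul_mem (G.mul_mem g.2 hkh.1) (G.inv_mem g.2), ?_⟩
            exact hQnorm.conj_mem kh hkh.2 g) hkg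
        · calc ((g : Hol N) * kh * (g : Hol N)⁻¹ * kg) • x
              = (g : Hol N) • kh • (g : Hol N)⁻¹ • kg • x := by
                simp only [mul_smul]
            _ = (g : Hol N) • kh • x := by rw [hkgx, inv_smul_smul]
            _ = (g : Hol N) • (h : Hol N) • x := by rw [hkhx]
            _ = ((g * h : G) : Hol N) • x := by rw [← mul_smul]; rfl
      inv_mem' := by
        rintro g ⟨kg, hkg, hkgx⟩
        refine ⟨(g : Hol N)⁻¹ * kg⁻¹ * (g : Hol N), ?_, ?_⟩
        · have : (g : Hol N)⁻¹ * kg⁻¹ * ((g : Hol N)⁻¹)⁻¹ ∈ K := by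
            exact ⟨by
              have := G.mul_mem (G.mul_mem (G.inv_mem g.2) (G.inv_mem hkg.1)) g.2
              simpa using this, by
              simpa using hQnorm.conj_mem kg⁻¹ (Q.inv_mem hkg.2) (g : Hol N)⁻¹⟩
          simpa using this
        · calc ((g : Hol N)⁻¹ * kg⁻¹ * (g : Hol N)) • x
              = (g : Hol N)⁻¹ • kg⁻¹ • (g : Hol N) • x := by simp only [mul_smul]
            _ = (g : Hol N)⁻¹ • kg⁻¹ • kg • x := by rw [← hkgx]
            _ = ((g⁻¹ : G) : Hol N) • x := by rw [inv_smul_smul]; rfl } with hH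
  -- the stabilizer of x in G is contained in H
  have h1 : MulAction.stabilizer G x ≤ H := by
    intro g hg
    refine ⟨1, K.one_mem, ?_⟩
    have : (g : Hol N) • x = x := hg
    simp [this]
  -- K (as a subgroup of G) is contained in H
  have h2 : K.subgroupOf G ≤ H := by
    intro k hk
    exact ⟨(k : Hol N), (Subgroup.mem_subgroupOf).mp hk, rfl⟩
  -- index divisibilities
  have idx1 : H.index ∣ Nat.card N := by
    have hdvd := Subgroup.index_dvd_of_le h1
    have horb : MulAction.orbit G x = Set.univ := by
      apply Set.eq_univ_iff_forall.mpr
      intro z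
      obtain ⟨g, hg, hgx⟩ := hG x z
      exact ⟨⟨g, hg⟩, hgx⟩
    rw [MulAction.index_stabilizer, horb, Set.ncard_univ] at hdvd
    exact hdvd
  have idx2 : H.index ∣ Q.index := by
    have hdvd := Subgroup.index_dvd_of_le h2
    have hKG : K.subgroupOf G = Q.subgroupOf G := Subgroup.inf_subgroupOf_left Q G
    rw [hKG] at hdvd
    exact hdvd.trans (Subgroup.relIndex_dvd_index_of_normal Q G)
  have hone : H.index = 1 := by
    by_contra hne
    obtain ⟨p, pp, hp⟩ := Nat.exists_prime_and_dvd hne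
    exact hQ.2 p pp (hp.trans idx2) (hp.trans idx1)
  have htop : H = ⊤ := Subgroup.index_eq_one.mp hone
  obtain ⟨g, hg, hgx⟩ := hG x y
  have hmem : (⟨g, hg⟩ : G) ∈ H := htop ▸ Subgroup.mem_top _
  obtain ⟨k, hk, hkx⟩ := hmem
  exact ⟨k, hk, by rw [holAct_eq_smul, hkx, ← holAct_eq_smul]; exact hgx⟩
end

section
/- Let N be a finite group whose holomorph Hol(N) contains a unique Hall π-subgroup Q, where π is the set of primes dividing |N|. Let G ≤ Hol(N) and H ≤ G such that every prime factor of [G:H] divides |N|. Then [G:H] = [G ∩ Q : H ∩ Q]. -/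
namespace Subgroup

variable {G : Type*} [Group G] {H K : Subgroup G}

theorem sup_eq_top_of_coprime_index (h : Nat.Coprime H.index K.index) : H ⊔ K = ⊤ :=
  index_eq_one.mp <|
    Nat.eq_one_of_dvd_coprimes h (index_dvd_of_le le_sup_left) (index_dvd_of_le le_sup_right)

theorem index_eq_relIndex_of_coprime [K.Normal] (h : Nat.Coprime H.index K.index) :
    H.index = H.relIndex K := by
  obtain hK | hK := eq_or_ne K.index 0
  · rw [hK, Nat.coprime_zero_right, index_eq_one] at h
    rw [h, index_top, relIndex_top_left]
  apply Nat.eq_of_mul_eq_mul_left (Nat.pos_of_ne_zero hK)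
  calc K.index * H.index = K.relIndex H * H.index := by
        rw [← relIndex_sup_right, sup_eq_top_of_coprime_index h, relIndex_top_right]
    _ = (H ⊓ K).index := by rw [← inf_relIndex_left, relIndex_mul_index inf_le_left]
    _ = H.relIndex K * K.index := by rw [← inf_relIndex_right, relIndex_mul_index inf_le_right]
    _ = K.index * H.relIndex K := mul_comm _ _

theorem relIndex_eq_relIndex_inf_of_coprime {L : Subgroup G} [L.Normal]
    (h : Nat.Coprime (H.relIndex K) (L.relIndex K)) :
    H.relIndex K = (H ⊓ L).relIndex (K ⊓ L) := by
  rw [← relIndex_subgroupOf (inf_le_left : K ⊓ L ≤ K), inf_subgroupOf_left, subgroupOf,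
    comap_inf, ← subgroupOf, ← subgroupOf, inf_relIndex_right]
  exact index_eq_relIndex_of_coprime h

end Subgroup

namespace IsHallPi

variable {N : Type*} [Group N] {Q : Subgroup (Hol N)}

theorem map_mulEquiv (hQ : IsHallPi Q) (φ : Hol N ≃* Hol N) : IsHallPi (Q.map φ.toMonoidHom) :=
  ⟨fun q hq hdvd => hQ.1 q hq (by rwa [← Subgroup.card_map_of_injective (f := φ.toMonoidHom) φ.injective]),
    fun q hq hdvd => hQ.2 q hq (by rwa [← Subgroup.index_map_equiv Q φ])⟩

theorem characteristic_of_unique (hQ : IsHallPi Q)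
    (huniq : ∀ Q' : Subgroup (Hol N), IsHallPi Q' → Q' = Q) : Q.Characteristic :=
  Subgroup.characteristic_iff_map_eq.mpr fun φ => huniq _ (hQ.map_mulEquiv φ)

end IsHallPi

theorem relindex_inf_hall_general {N : Type*} [Group N]
    (Q : Subgroup (Hol N)) (hQ : IsHallPi Q)
    (huniq : ∀ Q' : Subgroup (Hol N), IsHallPi Q' → Q' = Q)
    (G H : Subgroup (Hol N))
    (hdiv : ∀ q : ℕ, q.Prime → q ∣ H.relIndex G → q ∣ Nat.card N) :
    H.relIndex G = (H ⊓ Q).relIndex (G ⊓ Q) := by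
  have : Q.Characteristic := hQ.characteristic_of_unique huniq
  refine Subgroup.relIndex_eq_relIndex_inf_of_coprime (Nat.coprime_of_dvd fun q hq hH hQG => ?_)
  exact hQ.2 q hq (hQG.trans (Subgroup.relIndex_dvd_index_of_normal Q G)) (hdiv q hq hH)

/-- Let `N` be a finite group whose holomorph contains a unique
Hall `π`-subgroup `Q` (`π` the primes dividing `|N|`). Let `H ≤ G ≤ Hol(N)` with
every prime factor of `[G : H]` dividing `|N|`. Then `[G : H] = [G ⊓ Q : H ⊓ Q]`. -/
theorem relindex_inf_hall {N : Type*} [Group N] [Finite N]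
    (Q : Subgroup (Hol N)) (hQ : IsHallPi Q)
    (huniq : ∀ Q' : Subgroup (Hol N), IsHallPi Q' → Q' = Q)
    (G H : Subgroup (Hol N)) (hHG : H ≤ G)
    (hdiv : ∀ q : ℕ, q.Prime → q ∣ H.relIndex G → q ∣ Nat.card N) :
    H.relIndex G = (H ⊓ Q).relIndex (G ⊓ Q) :=
  relindex_inf_hall_general Q hQ huniq G H hdiv
end

section
/- Let N be cyclic of order p^e with p an odd prime and e ≥ 1. Then every transitive subgroup G of Hol(N) (acting naturally on N) contains an element of order p^e. -/
/-!
A Sylow `p`-subgroup `P` of a transitive `G` is still transitive on `N`: `p ∤ [G : P]`, while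
`p ^ e = [G : G₁]` divides `[G : P ∩ G₁] = [G : P] [P : P ∩ G₁]`. Hence some `g = (n₀, φ) ∈ P`
has `n₀` a generator of `N`. Write `φ x = x ^ m`; as `g`, and so `φ`, has some order `p ^ a`,
Fermat gives `m ≡ m ^ p ^ a ≡ 1 [ZMOD p]`. Now `(g ^ k).left = n₀ ^ (1 + m + ⋯ + m ^ (k - 1))`,
and for odd `p` lifting the exponent shows that this sum has `p`-adic valuation exactly `e - 1`
when `k = p ^ (e - 1)`. So `g ^ p ^ (e - 1) ≠ 1`, i.e. `p ^ e` divides the order of `g`.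
-/

theorem Int.prime_dvd_sub_one_of_dvd_pow_prime_pow_sub_one {p : ℕ} [Fact p.Prime] {m : ℤ}
    {a : ℕ} (h : (p : ℤ) ∣ m ^ p ^ a - 1) : (p : ℤ) ∣ m - 1 := by
  rw [← ZMod.intCast_zmod_eq_zero_iff_dvd] at h ⊢
  push_cast at h ⊢
  rwa [ZMod.pow_card_pow] at h

theorem Int.emultiplicity_geom_sum_prime_pow {p : ℕ} (hp : p.Prime) (hodd : Odd p) {m : ℤ}
    (hm : (p : ℤ) ∣ m - 1) (k : ℕ) :
    emultiplicity (p : ℤ) (∑ i ∈ Finset.range (p ^ k), m ^ i) = k := by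
  have hp' : Prime (p : ℤ) := Nat.prime_iff_prime_int.mp hp
  rcases eq_or_ne m 1 with rfl | hm1
  · simpa using emultiplicity_pow_self_of_prime hp' k
  have hpm : ¬ (p : ℤ) ∣ m := fun h =>
    hp'.not_dvd_one (by simpa using dvd_sub h hm)
  have hfin : emultiplicity (p : ℤ) (m - 1) ≠ ⊤ :=
    finiteMultiplicity_iff_emultiplicity_ne_top.1
      (Int.finiteMultiplicity_iff.2 ⟨by simp [hp.ne_one], sub_ne_zero.2 hm1⟩)
  have hlte := emultiplicity_pow_prime_pow_sub_pow_prime_pow hp' hodd (y := 1)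
    (by simpa using hm) hpm k
  rw [one_pow, ← geom_sum_mul, emultiplicity_mul hp', add_comm] at hlte
  exact (WithTop.add_left_inj hfin).1 hlte

open MulAction in
theorem Sylow.isPretransitive_of_card_eq_prime_pow {G X : Type*} [Group G] [Finite G]
    [MulAction G X] [IsPretransitive G X] {p e : ℕ} [hp : Fact p.Prime]
    (hX : Nat.card X = p ^ e) (P : Sylow p G) : IsPretransitive P X := by
  have hX0 : Nat.card X ≠ 0 := hX ▸ pow_ne_zero e hp.out.ne_zero
  have : Finite X := Nat.finite_of_card_ne_zero hX0
  obtain ⟨x⟩ : Nonempty X := (Nat.card_ne_zero.mp hX0).1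
  rw [isPretransitive_iff_orbit_eq_univ x]
  set H := stabilizer G x
  have hdvd : p ^ e ∣ H.relIndex P * (P : Subgroup G).index := by
    rw [← Subgroup.inf_relIndex_right, Subgroup.relIndex_mul_index inf_le_right, inf_comm,
      ← Subgroup.relIndex_mul_index inf_le_right, index_stabilizer_of_transitive, hX]
    exact dvd_mul_left _ _
  have hcop : Nat.Coprime (p ^ e) (P : Subgroup G).index :=
    .pow_left _ ((Nat.Prime.coprime_iff_not_dvd hp.out).2 P.not_dvd_index)
  have horbit : (orbit P x).ncard = H.relIndex P := (index_stabilizer P x).symm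
  refine Set.eq_of_subset_of_ncard_le (Set.subset_univ _) ?_ Set.finite_univ
  rw [Set.ncard_univ, hX, horbit]
  exact Nat.le_of_dvd Nat.card_pos (hcop.dvd_of_dvd_mul_right hdvd)

theorem MulAut.pow_apply_of_forall_apply_eq_zpow {N : Type*} [Group N] {φ : MulAut N} {m : ℤ}
    (hφ : ∀ x, φ x = x ^ m) (k : ℕ) (x : N) : (φ ^ k) x = x ^ m ^ k := by
  induction k with
  | zero => simp
  | succ k ih => rw [pow_succ, MulAut.mul_apply, hφ, map_zpow, ih, ← zpow_mul, ← pow_succ]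

namespace Hol

open SemidirectProduct

variable {N : Type*} [Group N]

instance : MulAction (Hol N) N where
  smul := holAct
  one_smul _ := by simp [HSMul.hSMul, holAct]
  mul_smul _ _ _ := by simp [HSMul.hSMul, holAct, mul_assoc]

theorem smul_def (g : Hol N) (x : N) : g • x = g.left * g.right x := rfl

instance [Finite N] : Finite (Hol N) :=
  Finite.of_injective (fun g : Hol N => (g.left, g.right)) fun _ _ h =>
    SemidirectProduct.ext (congrArg Prod.fst h) (congrArg Prod.snd h)

theorem right_pow (g : Hol N) (k : ℕ) : (g ^ k).right = g.right ^ k :=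
  map_pow rightHom g k

theorem left_pow_of_forall_right_apply {g : Hol N} {m : ℤ} (hm : ∀ x, g.right x = x ^ m)
    (k : ℕ) : (g ^ k).left = g.left ^ ∑ i ∈ Finset.range k, m ^ i := by
  induction k with
  | zero => simp
  | succ k ih =>
    rw [pow_succ', mul_left, ih, MonoidHom.id_apply, hm, ← zpow_mul, geom_sum_succ,
      ← zpow_one_add, mul_comm, add_comm]

theorem prime_pow_dvd_orderOf [IsCyclic N] {p e a : ℕ} [hp : Fact p.Prime] (hodd : Odd p)
    {g : Hol N} (hleft : orderOf g.left = p ^ e) (hg : orderOf g = p ^ a) :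
    p ^ e ∣ orderOf g := by
  obtain ⟨m, hm⟩ := MonoidHom.map_cyclic g.right.toMonoidHom
  rcases e with _ | e
  · simp
  have hleft_zpow (k : ℤ) : g.left ^ k = 1 ↔ (p : ℤ) ^ (e + 1) ∣ k := by
    rw [← orderOf_dvd_iff_zpow_eq_one, hleft]; push_cast; rfl
  have hm1 : (p : ℤ) ∣ m - 1 := by
    have hright : g.right ^ p ^ a = 1 := by
      rw [← right_pow, ← hg, pow_orderOf_eq_one, one_right]
    have hfix : g.left ^ (m ^ p ^ a - 1) = 1 := by
      rw [zpow_sub_one, ← MulAut.pow_apply_of_forall_apply_eq_zpow hm, hright,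
        MulAut.one_apply, mul_inv_cancel]
    exact Int.prime_dvd_sub_one_of_dvd_pow_prime_pow_sub_one
      ((dvd_pow_self _ e.succ_ne_zero).trans ((hleft_zpow _).1 hfix))
  rw [hg, Nat.pow_dvd_pow_iff_le_right hp.out.one_lt]
  by_contra! ha
  have hg1 : g ^ p ^ e = 1 := by
    rw [← orderOf_dvd_iff_pow_eq_one, hg]; exact pow_dvd_pow p (by omega)
  have hsum := (hleft_zpow _).1 (by rw [← left_pow_of_forall_right_apply hm, hg1, one_left])
  have hval := le_emultiplicity_of_pow_dvd hsum
  rw [Int.emultiplicity_geom_sum_prime_pow hp.out hodd hm1] at hval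
  norm_cast at hval
  omega

end Hol

theorem isTransitiveSub_iff_isPretransitive {N : Type*} [Group N] (G : Subgroup (Hol N)) :
    IsTransitiveSub G ↔ MulAction.IsPretransitive G N :=
  ⟨fun h => ⟨fun x y => let ⟨g, hg, hxy⟩ := h x y; ⟨⟨g, hg⟩, hxy⟩⟩,
    fun h x y => let ⟨g, hg⟩ := h.exists_smul_eq x y; ⟨g, g.2, hg⟩⟩

theorem transitive_has_elt_of_full_order_odd_general {N : Type*} [Group N]
    (p e : ℕ) (hp : p.Prime) (hodd : Odd p)
    [IsCyclic N] (hcard : Nat.card N = p ^ e)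
    (G : Subgroup (Hol N)) (hG : IsTransitiveSub G) :
    ∃ g ∈ G, orderOf g = p ^ e := by
  have : Fact p.Prime := ⟨hp⟩
  have : Finite N := Nat.finite_of_card_ne_zero (hcard ▸ pow_ne_zero e hp.ne_zero)
  have := (isTransitiveSub_iff_isPretransitive G).1 hG
  obtain ⟨P⟩ : Nonempty (Sylow p G) := inferInstance
  have := Sylow.isPretransitive_of_card_eq_prime_pow hcard P
  obtain ⟨n₀, hn₀⟩ := IsCyclic.exists_generator (α := N)
  obtain ⟨g, hg⟩ := MulAction.exists_smul_eq P (1 : N) n₀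
  have hleft : ((g : G) : Hol N).left = n₀ := by
    rw [← hg, Subgroup.smul_def, Subgroup.smul_def, Hol.smul_def, map_one, mul_one]
  obtain ⟨a, ha⟩ := IsPGroup.iff_orderOf.1 P.isPGroup' g
  have hdvd : p ^ e ∣ orderOf ((g : G) : Hol N) := by
    rw [← Subgroup.orderOf_coe, ← Subgroup.orderOf_coe] at ha
    refine Hol.prime_pow_dvd_orderOf hodd ?_ ha
    rw [hleft, orderOf_eq_card_of_forall_mem_zpowers hn₀, hcard]
  exact ⟨_ ^ (orderOf ((g : G) : Hol N) / p ^ e), G.pow_mem (g : G).2 _,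
    orderOf_pow_orderOf_div (orderOf_pos _).ne' hdvd⟩

/-- Let `N` be cyclic of order `p^e` (`p` an odd prime, `e ≥ 1`).
Every transitive subgroup `G` of `Hol(N)` contains an element of order `p^e`. -/
theorem transitive_has_elt_of_full_order_odd {N : Type*} [Group N]
    (p e : ℕ) (hp : p.Prime) (hodd : Odd p) (he : 1 ≤ e)
    [IsCyclic N] (hcard : Nat.card N = p ^ e)
    (G : Subgroup (Hol N)) (hG : IsTransitiveSub G) :
    ∃ g ∈ G, orderOf g = p ^ e :=
  transitive_has_elt_of_full_order_odd_general p e hp hodd hcard G hG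
end

section
/- Let N be cyclic of order 2^e with e ≥ 2. Then every transitive subgroup G of Hol(N) contains an element of order 2^{e-1}. -/
/-! ### Auxiliary number theory -/

lemma aux_sum_geom (a : ℕ) : ∀ m : ℕ,
    (∑ i ∈ Finset.range (2^m), a^i) = ∏ j ∈ Finset.range m, (1 + a^(2^j)) := by
  intro m
  induction m with
  | zero => simp
  | succ m ih =>
    rw [Finset.prod_range_succ, ← ih, pow_succ, mul_two, Finset.sum_range_add]
    rw [mul_add, mul_one, Finset.sum_mul]
    congr 1
    apply Finset.sum_congr rfl
    intro i _
    rw [pow_add, mul_comm]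

lemma aux_odd_sq (a : ℕ) (ha : Odd a) : ∃ s, a^2 = 8*s+1 := by
  obtain ⟨y, rfl⟩ := ha
  obtain ⟨s, hs⟩ := Nat.even_mul_succ_self y
  exact ⟨s, by nlinarith⟩

lemma aux_factor (a : ℕ) (ha : Odd a) (j : ℕ) : ∃ t, Odd t ∧ 1 + a^(2^(j+1)) = 2*t := by
  have h : a^(2^(j+1)) = (a^(2^j))^2 := by rw [← pow_mul, pow_succ]
  obtain ⟨s, hs⟩ := aux_odd_sq (a^(2^j)) (ha.pow)
  exact ⟨4*s+1, ⟨2*s, by ring⟩, by omega⟩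

lemma aux_prod (a : ℕ) (ha : Odd a) (m : ℕ) :
    ∃ q, Odd q ∧ ∏ j ∈ Finset.range m, (1 + a^(2^(j+1))) = 2^m * q := by
  induction m with
  | zero => exact ⟨1, odd_one, by simp⟩
  | succ m ih =>
    obtain ⟨q, hq, hprod⟩ := ih
    obtain ⟨t, ht, hft⟩ := aux_factor a ha m
    refine ⟨q*t, hq.mul ht, ?_⟩
    rw [Finset.prod_range_succ, hprod, hft]
    ring

lemma aux_coprime_two_pow (k q : ℕ) (hq : Odd q) : Nat.Coprime (2^k) q :=
  Nat.Coprime.pow_left _ ((Nat.prime_two.coprime_iff_not_dvd).mpr (by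
    rw [Nat.two_dvd_ne_zero, ← Nat.odd_iff]; exact hq))

lemma aux_key (e a c : ℕ) (he : 3 ≤ e) (ha : Odd a) (hc : ¬ (8 ∣ c*(1+a))) :
    ¬ ((2:ℕ)^e ∣ c * ∑ i ∈ Finset.range (2^(e-2)), a^i) := by
  intro hdvd
  rw [aux_sum_geom] at hdvd
  have h2 : e - 2 = (e - 3) + 1 := by omega
  rw [h2, Finset.prod_range_succ'] at hdvd
  obtain ⟨q, hq, hprod⟩ := aux_prod a ha (e-3)
  rw [hprod, pow_zero, pow_one] at hdvd
  have h3 : c * (2^(e-3) * q * (1+a)) = (c * (1+a) * 2^(e-3)) * q := by ring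
  rw [h3] at hdvd
  have hcop : Nat.Coprime (2^e) q := aux_coprime_two_pow e q hq
  have hdvd2 : 2^e ∣ c * (1+a) * 2^(e-3) := (Nat.Coprime.dvd_of_dvd_mul_right hcop) hdvd
  have h4 : (2:ℕ)^e = 8 * 2^(e-3) := by
    rw [show (8:ℕ) = 2^3 by norm_num, ← pow_add]
    congr 1; omega
  rw [h4] at hdvd2
  exact hc ((Nat.mul_dvd_mul_iff_right (show 0 < 2^(e-3) by positivity)).mp hdvd2)

lemma aux_two_pow_dvd_sum (a e : ℕ) (ha : Odd a) :
    (2:ℕ)^e ∣ ∑ i ∈ Finset.range (2^e), a^i := by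
  rw [aux_sum_geom]
  calc (2:ℕ)^e = ∏ _j ∈ Finset.range e, 2 := by simp
  _ ∣ _ := Finset.prod_dvd_prod_of_dvd _ _ (fun j _ => by
      obtain ⟨t, ht⟩ := (ha.pow : Odd (a^(2^j)))
      exact ⟨t+1, by omega⟩)

lemma aux_euler (a e : ℕ) (ha : Odd a) (he : 1 ≤ e) : a^(2^e) ≡ 1 [MOD 2^e] := by
  have hcop : Nat.Coprime a (2^e) := (aux_coprime_two_pow e a ha).symm
  have h1 : a ^ Nat.totient (2^e) ≡ 1 [MOD 2^e] := Nat.ModEq.pow_totient hcop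
  have h2 : Nat.totient (2^e) = 2^(e-1) := by
    rw [Nat.totient_prime_pow Nat.prime_two (by omega)]; norm_num
  rw [h2] at h1
  have h3 : (2:ℕ)^e = 2^(e-1) * 2 := by
    rw [← pow_succ]; congr 1; omega
  calc a^(2^e) = (a^(2^(e-1)))^2 := by rw [← pow_mul, h3]
  _ ≡ 1^2 [MOD 2^e] := h1.pow 2
  _ = 1 := one_pow 2

/-! ### Auxiliary group theory -/

lemma aux_hol_pow {N : Type*} [Group N] (u : N) (z : Hol N) (a c : ℕ)
    (h1 : z.right u = u^a) (h2 : z.left = u^c) (k : ℕ) :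
    (z^k).left = u^(c * ∑ i ∈ Finset.range k, a^i) ∧ (z^k).right u = u^(a^k) := by
  induction k with
  | zero => simp
  | succ k ih =>
    obtain ⟨ihl, ihr⟩ := ih
    constructor
    · rw [pow_succ, SemidirectProduct.mul_left, ihl]
      show _ * (z^k).right z.left = _
      rw [h2, map_pow, ihr, ← pow_mul, ← pow_add, Finset.sum_range_succ, mul_add,
        mul_comm c (a^k)]
    · rw [pow_succ, SemidirectProduct.mul_right, MulAut.mul_apply, h1, map_pow, ihr,
        ← pow_mul, ← pow_succ]

lemma aux_aut_eq_one {N : Type*} [Group N] (u : N) (hu : ∀ x : N, x ∈ Subgroup.zpowers u)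
    (φ : MulAut N) (h : φ u = u) : φ = 1 := by
  ext x
  obtain ⟨t, rfl⟩ := hu x
  rw [map_zpow, h]; rfl

lemma aux_order {H : Type*} [Group H] (x : H) (k : ℕ)
    (h1 : x^(2^(k+1)) = 1) (h2 : x^(2^k) ≠ 1) : orderOf x = 2^(k+1) := by
  have hdvd : orderOf x ∣ 2^(k+1) := orderOf_dvd_of_pow_eq_one h1
  obtain ⟨r, hr, hxr⟩ := (Nat.dvd_prime_pow Nat.prime_two).mp hdvd
  have hnd : ¬ orderOf x ∣ 2^k := fun hd => h2 (orderOf_dvd_iff_pow_eq_one.mp hd)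
  rw [hxr] at hnd ⊢
  congr 1
  by_contra hne
  exact hnd (pow_dvd_pow 2 (by omega))

/-- Let `N` be cyclic of order `2^e` (`e ≥ 2`). Every transitive
subgroup `G` of `Hol(N)` contains an element of order `2^{e-1}`. -/
theorem transitive_has_elt_of_order_two_pow {N : Type*} [Group N]
    (e : ℕ) (he : 2 ≤ e) [IsCyclic N] (hcard : Nat.card N = 2 ^ e)
    (G : Subgroup (Hol N)) (hG : IsTransitiveSub G) :
    ∃ g ∈ G, orderOf g = 2 ^ (e - 1) := by
  have hNfin : Finite N := Nat.finite_of_card_ne_zero (by rw [hcard]; positivity)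
  obtain ⟨u, hu⟩ := IsCyclic.exists_generator (α := N)
  have hutop : Subgroup.zpowers u = ⊤ := by ext x; simpa using hu x
  have hord : orderOf u = 2^e := by
    rw [← Nat.card_zpowers, hutop, ← hcard]
    exact Nat.card_congr (Equiv.Set.univ N)
  -- expressing automorphism values as powers of u
  have hexp : ∀ φ : MulAut N, ∃ a : ℕ, φ u = u ^ a := by
    intro φ
    obtain ⟨a, ha⟩ := mem_powers_iff_mem_zpowers.mpr (hu (φ u))
    exact ⟨a, ha.symm⟩
  have hodd : ∀ (φ : MulAut N) (a : ℕ), φ u = u ^ a → Odd a := by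
    intro φ a hφ
    obtain ⟨w, hw⟩ := φ.surjective u
    obtain ⟨t, rfl⟩ := mem_powers_iff_mem_zpowers.mpr (hu w)
    rw [map_pow, hφ, ← pow_mul] at hw
    have hmod := pow_eq_pow_iff_modEq.mp (show u ^ (a*t) = u ^ 1 by rw [pow_one]; exact hw)
    rw [hord] at hmod
    have h2 : a*t ≡ 1 [MOD 2] := hmod.of_dvd (dvd_pow_self 2 (by omega))
    have hmod2 : (a*t) % 2 = 1 := by simpa [Nat.ModEq] using h2
    exact (Nat.odd_mul.mp (Nat.odd_iff.mpr hmod2)).1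
  -- every element of the holomorph satisfies z^(2^e) = 1
  have hord_all : ∀ z : Hol N, z ^ (2^e) = 1 := by
    intro z
    obtain ⟨a, ha⟩ := hexp z.right
    obtain ⟨c, hc⟩ := mem_powers_iff_mem_zpowers.mpr (hu z.left)
    have haodd := hodd z.right a ha
    obtain ⟨L, R⟩ := aux_hol_pow u z a c ha hc.symm (2^e)
    apply SemidirectProduct.ext
    · rw [L]
      show _ = (1:N)
      apply orderOf_dvd_iff_pow_eq_one.mp
      rw [hord]
      exact Dvd.dvd.mul_left (aux_two_pow_dvd_sum a e haodd) c
    · show _ = (1 : MulAut N)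
      apply aux_aut_eq_one u hu
      rw [R]
      calc u ^ (a ^ (2^e)) = u ^ 1 := by
            apply pow_eq_pow_iff_modEq.mpr
            rw [hord]
            exact aux_euler a e haodd (by omega)
      _ = u := pow_one u
  -- it suffices to find z ∈ G with z^(2^(e-2)) ≠ 1
  suffices hsuff : ∃ z ∈ G, z^(2^(e-2)) ≠ 1 by
    obtain ⟨z, hzG, hz2⟩ := hsuff
    have hz1 := hord_all z
    obtain ⟨r, hre, hzr⟩ := (Nat.dvd_prime_pow Nat.prime_two).mp
      (orderOf_dvd_of_pow_eq_one hz1)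
    have hrge : e - 1 ≤ r := by
      by_contra hlt
      exact hz2 (orderOf_dvd_iff_pow_eq_one.mp (by rw [hzr]; exact pow_dvd_pow 2 (by omega)))
    refine ⟨z ^ (2^(r - (e-1))), G.pow_mem hzG _, ?_⟩
    have hw1 : (z ^ (2^(r - (e-1)))) ^ (2^((e-2)+1)) = 1 := by
      rw [← pow_mul, ← pow_add, show r - (e-1) + ((e-2)+1) = r by omega, ← hzr]
      exact pow_orderOf_eq_one z
    have hw2 : (z ^ (2^(r - (e-1)))) ^ (2^(e-2)) ≠ 1 := by
      rw [← pow_mul, ← pow_add, show r - (e-1) + (e-2) = r - 1 by omega]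
      intro hcon
      have hd := orderOf_dvd_of_pow_eq_one hcon
      rw [hzr] at hd
      have := (Nat.pow_dvd_pow_iff_le_right (by norm_num : 1 < 2)).mp hd
      omega
    have := aux_order _ (e-2) hw1 hw2
    rw [this]
    congr 1
    omega
  -- get the two transitivity witnesses
  obtain ⟨g, hgG, hg⟩ := hG 1 u
  obtain ⟨h, hhG, hh⟩ := hG 1 (u^2)
  have hgl : g.left = u := by simpa [holAct] using hg
  have hhl : h.left = u^2 := by simpa [holAct] using hh
  obtain ⟨a, ha⟩ := hexp g.right
  obtain ⟨b, hb⟩ := hexp h.right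
  have haodd := hodd g.right a ha
  have hbodd := hodd h.right b hb
  -- case e = 2
  rcases Nat.lt_or_ge e 3 with he2 | he3
  · refine ⟨g, hgG, ?_⟩
    have h0 : e - 2 = 0 := by omega
    rw [h0, pow_zero, pow_one]
    intro hcon
    have : g.left = (1 : N) := by rw [hcon]; rfl
    rw [hgl] at this
    have h1 : orderOf u = 1 := by rw [this]; exact orderOf_one
    rw [hord] at h1
    have h4 : (4:ℕ) ≤ 2^e := by
      calc (4:ℕ) = 2^2 := by norm_num
      _ ≤ 2^e := Nat.pow_le_pow_right (by norm_num) he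
    omega
  · -- for e ≥ 3 : candidate criterion
    have hcand : ∀ z : Hol N, z ∈ G → ∀ a' c : ℕ, z.right u = u^a' → z.left = u^c → Odd a' →
        ¬ (8 ∣ c * (1 + a')) → ∃ z ∈ G, z^(2^(e-2)) ≠ 1 := by
      intro z hzG a' c h1 h2 hodd' hc
      refine ⟨z, hzG, ?_⟩
      intro heq
      have L := (aux_hol_pow u z a' c h1 h2 (2^(e-2))).1
      rw [heq] at L
      have hone : u ^ (c * ∑ i ∈ Finset.range (2^(e-2)), a'^i) = 1 := by
        rw [← L]; rfl
      have hd := orderOf_dvd_iff_pow_eq_one.mpr hone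
      rw [hord] at hd
      exact aux_key e a' c he3 hodd' hc hd
    by_cases h8a : (8:ℕ) ∣ 1 * (1+a)
    · -- need g * h or h
      have hghr : (g*h).right u = u^(a*b) := by
        rw [SemidirectProduct.mul_right, MulAut.mul_apply, hb, map_pow, ha, ← pow_mul]
      have hghl : (g*h).left = u^(a*2+1) := by
        rw [SemidirectProduct.mul_left]
        show g.left * g.right h.left = _
        rw [hgl, hhl, map_pow, ha, ← pow_mul, ← pow_succ']
      by_cases h8ab : (8:ℕ) ∣ (a*2+1) * (1+(a*b))
      · -- use h; derive b ≡ 1 mod 4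
        apply hcand h hhG b 2 hb hhl hbodd
        intro h8b
        have h4b : (4:ℕ) ∣ 1 + b := by omega
        have hodd2a : Odd (a*2+1) := ⟨a, by ring⟩
        have hcop : Nat.Coprime 8 (a*2+1) := by
          have := aux_coprime_two_pow 3 (a*2+1) hodd2a
          norm_num at this ⊢
          exact this
        have h8ab' : (8:ℕ) ∣ 1 + a*b := hcop.dvd_of_dvd_mul_left h8ab
        have hma : a % 4 = 3 := by omega
        have hmb : b % 4 = 3 := by omega
        have hmab : (a*b) % 4 = 3 := by omega
        have hmm := Nat.mul_mod a b 4
        rw [hma, hmb] at hmm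
        omega
      · exact hcand (g*h) (G.mul_mem hgG hhG) (a*b) (a*2+1) hghr hghl
          (haodd.mul hbodd) h8ab
    · exact hcand g hgG a 1 ha (by rw [hgl, pow_one]) haodd h8a
end

section
/- Let N be cyclic of order 2^e (e ≥ 2) with generator σ. Let G be a transitive subgroup of Hol(N) having no element of order 2^e. Then for every element (σ^v, φ_b) of G, one has b − 1 ≡ 2v (mod 4); in particular, the stabiliser of the identity of N in G is contained in the subgroup {φ_a : a ≡ 1 (mod 4)} of Aut(N). -/
/-- Partial geometric sum `1 + d + ⋯ + d^(k-1)`. -/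
def Sgeo (d : ℤ) : ℕ → ℤ
  | 0 => 0
  | k + 1 => 1 + d * Sgeo d k

lemma Sgeo_add (d : ℤ) (m n : ℕ) : Sgeo d (m + n) = Sgeo d m + d ^ m * Sgeo d n := by
  induction m with
  | zero => simp [Sgeo]
  | succ m ih =>
    have : m + 1 + n = (m + n) + 1 := by omega
    rw [this, Sgeo, ih, Sgeo]
    ring

lemma Sgeo_geom (d : ℤ) (k : ℕ) : (d - 1) * Sgeo d k + 1 = d ^ k := by
  induction k with
  | zero => simp [Sgeo]
  | succ k ih => rw [Sgeo, pow_succ, ← ih]; ring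

lemma Sgeo_two_pow (d : ℤ) (hd : ∃ t, d = 4 * t + 1) (k : ℕ) :
    ∃ w, Odd w ∧ Sgeo d (2 ^ k) = 2 ^ k * w := by
  obtain ⟨t, rfl⟩ := hd
  induction k with
  | zero => exact ⟨1, odd_one, by simp [Sgeo]⟩
  | succ k ih =>
    obtain ⟨w, hw, hS⟩ := ih
    have hpow : ∃ s, (4 * t + 1) ^ (2 ^ k) = 4 * s + 1 := by
      have h1 : (4 * t + 1) ^ (2 ^ k) ≡ 1 ^ (2 ^ k) [ZMOD 4] := by
        exact Int.ModEq.pow _ (by unfold Int.ModEq; omega)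
      simp only [one_pow] at h1
      have := Int.ModEq.dvd h1
      obtain ⟨s, hs⟩ := this
      exact ⟨-s, by omega⟩
    obtain ⟨s, hs⟩ := hpow
    have h2 : (2:ℕ) ^ (k+1) = 2 ^ k + 2 ^ k := by omega
    rw [h2, Sgeo_add, hS, hs]
    exact ⟨w * (2 * s + 1), hw.mul (by exact ⟨s, by ring⟩),  by ring⟩

lemma key_order {N : Type*} [Group N] (e : ℕ) (he : 2 ≤ e) (σ : N)
    (hgen : ∀ x : N, x ∈ Subgroup.zpowers σ) (hord : orderOf σ = 2 ^ e)
    (u d : ℤ) (hu : Odd u) (hd : ∃ t, d = 4 * t + 1)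
    (φ : MulAut N) (hφ : φ σ = σ ^ d) :
    orderOf (⟨σ ^ u, φ⟩ : Hol N) = 2 ^ e := by
  have hone : ∀ m : ℤ, σ ^ m = 1 ↔ ((2:ℤ) ^ e) ∣ m := by
    intro m
    rw [← orderOf_dvd_iff_zpow_eq_one, hord]
    push_cast
    rfl
  -- action of powers of φ on σ
  have hφk : ∀ k : ℕ, (φ ^ k) σ = σ ^ (d ^ k) := by
    intro k
    induction k with
    | zero => simp
    | succ k ih =>
      rw [pow_succ, MulAut.mul_apply, hφ, map_zpow, ih, ← zpow_mul, ← pow_succ]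
  -- powers of the element
  set g : Hol N := ⟨σ ^ u, φ⟩ with hg
  have hpow : ∀ k : ℕ, g ^ k = (⟨σ ^ (u * Sgeo d k), φ ^ k⟩ : Hol N) := by
    intro k
    induction k with
    | zero =>
      refine SemidirectProduct.ext ?_ ?_
      · simp [Sgeo]
      · simp
    | succ k ih =>
      rw [pow_succ', ih]
      refine SemidirectProduct.ext ?_ ?_
      · show (σ ^ u) * (MonoidHom.id (MulAut N)) φ (σ ^ (u * Sgeo d k)) = σ ^ (u * Sgeo d (k+1))
        rw [MonoidHom.id_apply, map_zpow, hφ, ← zpow_mul, ← zpow_add, Sgeo]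
        congr 1
        ring
      · show φ * φ ^ k = φ ^ (k + 1)
        rw [pow_succ']
  -- g ^ (2^e) = 1
  obtain ⟨w, hw, hS⟩ := Sgeo_two_pow d hd e
  have hd2e : ((2:ℤ) ^ e) ∣ d ^ (2 ^ e) - 1 := by
    have := Sgeo_geom d (2 ^ e)
    have : d ^ (2 ^ e) - 1 = (d - 1) * (2 ^ e * w) := by rw [← hS]; omega
    rw [this]
    exact ⟨(d - 1) * w, by ring⟩
  have hgtop : g ^ (2 ^ e) = 1 := by
    rw [hpow]
    refine SemidirectProduct.ext ?_ ?_
    · show σ ^ (u * Sgeo d (2 ^ e)) = 1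
      rw [hS, hone]
      exact ⟨u * w, by ring⟩
    · show φ ^ (2 ^ e) = 1
      apply MulEquiv.ext
      intro x
      obtain ⟨m, hm⟩ := hgen x
      simp only [← hm]
      rw [map_zpow, hφk, ← zpow_mul]
      show σ ^ (d ^ 2 ^ e * m) = σ ^ m
      obtain ⟨q, hq⟩ := hd2e
      have : d ^ (2 ^ e) * m = m + (2 ^ e * q) * m := by rw [← hq]; ring
      rw [this, zpow_add]
      have h1 : σ ^ ((2:ℤ) ^ e * q * m) = 1 := (hone _).2 ⟨q * m, by ring⟩
      rw [h1, mul_one]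
  -- g ^ (2^(e-1)) ≠ 1
  obtain ⟨w', hw', hS'⟩ := Sgeo_two_pow d hd (e - 1)
  have hghalf : g ^ (2 ^ (e - 1)) ≠ 1 := by
    intro h
    have hleft := congrArg SemidirectProduct.left h
    rw [hpow] at hleft
    have : σ ^ (u * Sgeo d (2 ^ (e-1))) = 1 := hleft
    rw [hS', hone] at this
    have h2 : (2:ℤ) ^ e = 2 ^ (e-1) * 2 := by
      have he1 : e - 1 + 1 = e := by omega
      rw [← he1, pow_succ, he1]
    rw [h2] at this
    have h3 : u * ((2:ℤ) ^ (e-1) * w') = 2 ^ (e-1) * (u * w') := by ring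
    rw [h3] at this
    have h4 : (2:ℤ) ∣ u * w' := by
      rcases this with ⟨q, hq⟩
      have h5 : (2:ℤ) ^ (e-1) ≠ 0 := by positivity
      have : u * w' = 2 * q := by
        have := mul_left_cancel₀ h5 (by linarith [hq] : (2:ℤ)^(e-1) * (u*w') = 2^(e-1) * (2*q))
        exact this
      exact ⟨q, this⟩
    have h6 : Odd (u * w') := hu.mul hw'
    obtain ⟨q6, hq6⟩ := h6
    obtain ⟨q7, hq7⟩ := h4
    omega
  -- conclude
  have hdvd : orderOf g ∣ 2 ^ e := orderOf_dvd_of_pow_eq_one hgtop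
  obtain ⟨k, hk, hkeq⟩ := (Nat.dvd_prime_pow Nat.prime_two).1 hdvd
  rcases Nat.lt_or_ge k e with hlt | hge
  · exfalso
    apply hghalf
    apply orderOf_dvd_iff_pow_eq_one.1
    rw [hkeq]
    exact pow_dvd_pow 2 (by omega)
  · rw [hkeq]; congr 1; omega

lemma odd_of_aut {N : Type*} [Group N] (e : ℕ) (he : 2 ≤ e) (σ : N)
    (hgen : ∀ x : N, x ∈ Subgroup.zpowers σ) (hord : orderOf σ = 2 ^ e)
    (φ : MulAut N) (b : ℤ) (hφ : φ σ = σ ^ b) : Odd b := by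
  obtain ⟨m, hm⟩ := hgen (φ.symm σ)
  have h1 : σ = σ ^ (b * m) := by
    have h0 := φ.apply_symm_apply σ
    rw [← hm] at h0
    calc σ = φ (σ ^ m) := h0.symm
      _ = (φ σ) ^ m := map_zpow φ σ m
      _ = σ ^ (b * m) := by rw [hφ, ← zpow_mul]
  have h2 : σ ^ (b * m - 1) = 1 := by
    rw [zpow_sub, ← h1, zpow_one, mul_inv_cancel]
  have h3 : ((orderOf σ : ℤ)) ∣ (b * m - 1) := orderOf_dvd_iff_zpow_eq_one.2 h2
  rw [hord] at h3
  have h4 : (2:ℤ) ∣ b * m - 1 := by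
    push_cast at h3
    exact dvd_trans (dvd_pow_self 2 (by omega : e ≠ 0)) h3
  rcases Int.even_or_odd b with hb | hb
  · exfalso
    obtain ⟨r, hr⟩ := hb
    obtain ⟨q, hq⟩ := h4
    rw [hr] at hq
    have h5 : 2 * (r * m) - 2 * q = 1 := by linarith
    set x := r * m with hx
    omega
  · exact hb


/-- Let `N` be cyclic of order `2^e` (`e ≥ 2`) with generator `σ`,
and let `G` be a transitive subgroup of `Hol(N)` having no element of order `2^e`.
Then for every `(σ^v, φ_b) ∈ G` one has `b - 1 ≡ 2v (mod 4)`; in particular, every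
element of the stabiliser of `1_N` in `G` acts on `N` as `φ_a` for some
`a ≡ 1 (mod 4)`. -/
theorem no_full_order_congruence {N : Type*} [Group N]
    (e : ℕ) (he : 2 ≤ e)
    (σ : N) (hgen : ∀ x : N, x ∈ Subgroup.zpowers σ) (hcard : Nat.card N = 2 ^ e)
    (G : Subgroup (Hol N)) (hG : IsTransitiveSub G)
    (hno : ∀ g ∈ G, orderOf g ≠ 2 ^ e) :
    (∀ (v b : ℤ) (φb : MulAut N), φb σ = σ ^ b →
        (⟨σ ^ v, φb⟩ : Hol N) ∈ G → Int.ModEq 4 (b - 1) (2 * v)) ∧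
      (∀ g ∈ G, holAct g 1 = 1 →
        ∃ a : ℤ, Int.ModEq 4 a 1 ∧ g.right σ = σ ^ a) := by
  have hord : orderOf σ = 2 ^ e := by
    rw [orderOf_eq_card_of_forall_mem_zpowers hgen, hcard]
  -- transitive element moving 1 to σ
  obtain ⟨g₀, hg₀G, hg₀⟩ := hG 1 σ
  have hg₀left : g₀.left = σ := by
    have : g₀.left * g₀.right 1 = σ := hg₀
    rwa [map_one, mul_one] at this
  obtain ⟨c, hc⟩ := hgen (g₀.right σ)
  have hc' : g₀.right σ = σ ^ c := hc.symm
  have hcodd : Odd c := odd_of_aut e he σ hgen hord g₀.right c hc'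
  -- c ≡ 3 (mod 4)
  have hc3 : ∃ s, c = 4 * s + 3 := by
    obtain ⟨r, hr⟩ := hcodd
    rcases Int.even_or_odd r with ⟨s, hs⟩ | ⟨s, hs⟩
    · exfalso
      have hg₀eq : g₀ = (⟨σ ^ (1:ℤ), g₀.right⟩ : Hol N) := by
        refine SemidirectProduct.ext ?_ rfl
        rw [hg₀left, zpow_one]
      have := key_order e he σ hgen hord 1 c odd_one ⟨s, by omega⟩ g₀.right hc'
      rw [← hg₀eq] at this
      exact hno g₀ hg₀G this
    · exact ⟨s, by omega⟩
  obtain ⟨s₂, hs₂⟩ := hc3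
  have part1 : ∀ (v b : ℤ) (φb : MulAut N), φb σ = σ ^ b →
      (⟨σ ^ v, φb⟩ : Hol N) ∈ G → Int.ModEq 4 (b - 1) (2 * v) := by
    intro v b φb hφ hmem
    obtain ⟨t, ht⟩ := odd_of_aut e he σ hgen hord φb b hφ
    rcases Int.even_or_odd v with ⟨r, hr⟩ | ⟨r, hr⟩ <;>
      rcases Int.even_or_odd t with ⟨s, hs⟩ | ⟨s, hs⟩
    · -- v even, t even : fine
      show (b - 1) % 4 = (2 * v) % 4
      omega
    · -- v even, t odd : contradiction via g * g₀
      exfalso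
      set g' : Hol N := (⟨σ ^ v, φb⟩ : Hol N) * g₀ with hg'
      have hg'eq : g' = (⟨σ ^ (v + b), φb * g₀.right⟩ : Hol N) := by
        refine SemidirectProduct.ext ?_ rfl
        show σ ^ v * (MonoidHom.id (MulAut N)) φb g₀.left = σ ^ (v + b)
        rw [MonoidHom.id_apply, hg₀left, hφ, ← zpow_add]
      have hact : (φb * g₀.right) σ = σ ^ (b * c) := by
        rw [MulAut.mul_apply, hc', map_zpow, hφ, ← zpow_mul, mul_comm]
      have hoddvb : Odd (v + b) := ⟨r + t, by omega⟩
      have hbc : ∃ t', b * c = 4 * t' + 1 := by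
        refine ⟨4 * s * s₂ + 3 * s + 3 * s₂ + 2, ?_⟩
        have hb : b = 4 * s + 3 := by omega
        rw [hb, hs₂]; ring
      have := key_order e he σ hgen hord (v + b) (b * c) hoddvb hbc _ hact
      rw [← hg'eq] at this
      exact hno g' (G.mul_mem hmem hg₀G) this
    · -- v odd, t even : contradiction directly
      exfalso
      have hb1 : ∃ t', b = 4 * t' + 1 := ⟨s, by omega⟩
      have := key_order e he σ hgen hord v b ⟨r, hr⟩ hb1 φb hφ
      exact hno _ hmem this
    · -- v odd, t odd : fine
      show (b - 1) % 4 = (2 * v) % 4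
      omega
  refine ⟨part1, ?_⟩
  intro g hgG hfix
  have hgleft : g.left = 1 := by
    have : g.left * g.right 1 = 1 := hfix
    rwa [map_one, mul_one] at this
  obtain ⟨a, ha⟩ := hgen (g.right σ)
  have ha' : g.right σ = σ ^ a := ha.symm
  have hmem : (⟨σ ^ (0:ℤ), g.right⟩ : Hol N) ∈ G := by
    have : (⟨σ ^ (0:ℤ), g.right⟩ : Hol N) = g := by
      refine SemidirectProduct.ext ?_ rfl
      rw [zpow_zero, hgleft]
    rwa [this]
  have := part1 0 a g.right ha' hmem
  refine ⟨a, ?_, ha'⟩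
  have h1 : (a - 1) % 4 = (2 * 0) % 4 := this
  show a % 4 = 1 % 4
  omega
end

section
/- Let N be cyclic of order p^e (p prime). Let G ≤ Hol(N) and H ≤ G with core C = Core_G(H) (the largest normal subgroup of G contained in H). If |H ∩ N| ≥ p, then G/C has no element of order p^e. -/
open Finset in
private lemma geomSumDecomp (x : ℤ) (m n : ℕ) :
    ∑ i ∈ range (m * n), x ^ i = (∑ i ∈ range m, x ^ i) * (∑ j ∈ range n, (x ^ m) ^ j) := by
  induction n with
  | zero => simp
  | succ n ih =>
    have h1 : m * (n + 1) = m * n + m := by ring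
    rw [h1, Finset.sum_range_add, ih, Finset.sum_range_succ]
    have h2 : ∑ i ∈ range m, x ^ (m * n + i) = (x ^ m) ^ n * ∑ i ∈ range m, x ^ i := by
      rw [Finset.mul_sum]
      refine Finset.sum_congr rfl fun i _ => ?_
      rw [← pow_mul, ← pow_add]
    rw [h2]; ring

open Finset in
private lemma keyDvd (p : ℕ) (u : ℤ) (hu : (p : ℤ) ∣ u - 1) (k : ℕ) :
    (p : ℤ) ^ k ∣ ∑ i ∈ range (p ^ k), u ^ i := by
  have hur : ∀ r : ℕ, (p : ℤ) ∣ u ^ r - 1 := fun r => by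
    refine hu.trans ?_
    simpa using sub_dvd_pow_sub_pow u 1 r
  induction k with
  | zero => simp
  | succ k ih =>
    rw [show p ^ (k + 1) = p ^ k * p from pow_succ p k, geomSumDecomp, pow_succ]
    refine mul_dvd_mul ih ?_
    have h3 : ∑ j ∈ range p, (u ^ p ^ k) ^ j
        = (∑ j ∈ range p, ((u ^ p ^ k) ^ j - 1)) + (p : ℤ) := by
      rw [Finset.sum_sub_distrib, Finset.sum_const, Finset.card_range]
      ring
    rw [h3]
    refine dvd_add (Finset.dvd_sum fun j _ => ?_) dvd_rfl
    rw [← pow_mul]; exact hur _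

private lemma dvdSubOne (p : ℕ) (hp : p.Prime) (u : ℤ) (k : ℕ)
    (h : (p : ℤ) ∣ u ^ p ^ k - 1) : (p : ℤ) ∣ u - 1 := by
  haveI : Fact p.Prime := ⟨hp⟩
  have hp2 := hp.two_le
  have h1 : (u : ZMod p) ^ p ^ k = 1 := by
    have h0 := (ZMod.intCast_zmod_eq_zero_iff_dvd _ p).mpr h
    push_cast at h0
    linear_combination h0
  have hu0 : (u : ZMod p) ≠ 0 := by
    intro h0
    rw [h0, zero_pow (by positivity)] at h1
    exact zero_ne_one h1
  have h2 : (u : ZMod p) ^ (p - 1) = 1 := ZMod.pow_card_sub_one_eq_one hu0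
  have d1 : orderOf (u : ZMod p) ∣ p ^ k := orderOf_dvd_of_pow_eq_one h1
  have d2 : orderOf (u : ZMod p) ∣ p - 1 := orderOf_dvd_of_pow_eq_one h2
  obtain ⟨j, hj, hje⟩ := (Nat.dvd_prime_pow hp).mp d1
  have hord : orderOf (u : ZMod p) = 1 := by
    rcases Nat.eq_zero_or_pos j with rfl | hj1
    · simpa using hje
    · exfalso
      have hpd : p ∣ p - 1 := dvd_trans (dvd_pow_self p hj1.ne') (hje ▸ d2)
      have := Nat.le_of_dvd (by omega) hpd
      omega
  have he1 : (u : ZMod p) = 1 := orderOf_eq_one_iff.mp hord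
  have : ((u - 1 : ℤ) : ZMod p) = 0 := by push_cast [he1]; ring
  exact (ZMod.intCast_zmod_eq_zero_iff_dvd _ p).mp this

private lemma holFinite_s14 {N : Type*} [Group N] [Finite N] : Finite (Hol N) :=
  Finite.of_injective (fun z => (z.left, z.right)) (by
    intro a b h
    simp only [Prod.mk.injEq] at h
    exact SemidirectProduct.ext h.1 h.2)

open Finset in
private lemma holPow {N : Type*} [Group N] [IsCyclic N] (p e : ℕ) (hp : p.Prime)
    (he : 1 ≤ e) (hcard : Nat.card N = p ^ e) (z : Hol N) (a : ℕ)
    (hz : orderOf z = p ^ a) :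
    z ^ p ^ e = 1 ∧ SemidirectProduct.rightHom (z ^ p ^ (e - 1)) = 1 := by
  haveI : Fact p.Prime := ⟨hp⟩
  haveI : NeZero (p ^ e) := ⟨pow_ne_zero e hp.pos.ne'⟩
  obtain ⟨g, hg⟩ := IsCyclic.exists_generator (α := N)
  have hog : orderOf g = p ^ e := (orderOf_eq_card_of_forall_mem_zpowers hg).trans hcard
  set φ : MulAut N := z.right with hφdef
  obtain ⟨u, hu⟩ := Subgroup.mem_zpowers_iff.mp (hg (φ g))
  -- g ^ u = φ g
  have hgpow : ∀ t : ℤ, ((p : ℤ) ^ e ∣ t) → g ^ t = 1 := by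
    intro t ht
    refine orderOf_dvd_iff_zpow_eq_one.mp ?_
    rw [hog]; push_cast at ht ⊢; exact ht
  have hgdvd : ∀ t : ℤ, g ^ t = 1 → (p : ℤ) ^ e ∣ t := by
    intro t ht
    have := orderOf_dvd_iff_zpow_eq_one.mpr ht
    rw [hog] at this; push_cast at this ⊢; exact this
  have hφc : ∀ c : ℤ, φ (g ^ c) = g ^ (u * c) := by
    intro c
    rw [map_zpow, ← hu, ← zpow_mul, mul_comm]
  have hφk : ∀ (k : ℕ) (c : ℤ), (φ ^ k) (g ^ c) = g ^ (u ^ k * c) := by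
    intro k
    induction k with
    | zero => intro c; simp
    | succ k ih =>
      intro c
      rw [pow_succ', MulAut.mul_apply, ih, hφc]
      congr 1
      ring
  -- φ ^ k = 1 ↔ p^e ∣ u^k - 1
  have hφ_one : ∀ k : ℕ, ((p : ℤ) ^ e ∣ u ^ k - 1) → φ ^ k = 1 := by
    intro k hk
    ext x
    obtain ⟨c, hc⟩ := Subgroup.mem_zpowers_iff.mp (hg x)
    rw [← hc, hφk, MulAut.one_apply]
    have : g ^ (u ^ k * c) = g ^ ((u ^ k - 1) * c) * g ^ c := by
      rw [← zpow_add]; ring_nf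
    rw [this, hgpow _ (hk.mul_right c), one_mul]
  have hφ_dvd : ∀ k : ℕ, φ ^ k = 1 → (p : ℤ) ^ e ∣ u ^ k - 1 := by
    intro k hk
    have h1 : (φ ^ k) (g ^ (1 : ℤ)) = g ^ (1 : ℤ) := by rw [hk, MulAut.one_apply]
    rw [hφk, mul_one] at h1
    refine hgdvd _ ?_
    rw [zpow_sub, h1, mul_inv_cancel]
  -- the unit u in ZMod (p^e)
  obtain ⟨w, hw⟩ := Subgroup.mem_zpowers_iff.mp (hg (φ⁻¹ g))
  have huw : (p : ℤ) ^ e ∣ u * w - 1 := by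
    have h1 : φ (g ^ w) = g := by
      rw [hw]
      exact φ.apply_symm_apply g
    rw [hφc] at h1
    refine hgdvd _ ?_
    rw [zpow_sub, h1, zpow_one, mul_inv_cancel]
  have hcast : ∀ t : ℤ, ((p : ℤ) ^ e ∣ t) ↔ ((t : ZMod (p ^ e)) = 0) := by
    intro t
    rw [ZMod.intCast_zmod_eq_zero_iff_dvd]
    push_cast
    rfl
  have hvu : ((u : ZMod (p ^ e)) * (w : ZMod (p ^ e)) = 1) := by
    have := (hcast _).mp huw
    push_cast at this
    linear_combination this
  set v : (ZMod (p ^ e))ˣ := ⟨(u : ZMod (p ^ e)), (w : ZMod (p ^ e)), hvu, by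
    rw [mul_comm]; exact hvu⟩ with hvdef
  have hviff : ∀ k : ℕ, v ^ k = 1 ↔ (p : ℤ) ^ e ∣ u ^ k - 1 := by
    intro k
    rw [Units.ext_iff, Units.val_pow_eq_pow_val, Units.val_one, hcast]
    constructor
    · intro hh; push_cast; rw [hvdef] at hh; simp only at hh
      push_cast at hh; linear_combination hh
    · intro hh; push_cast at hh; linear_combination hh
  -- orderOf v divides p ^ a
  have hφpa : φ ^ p ^ a = 1 := by
    have : z ^ p ^ a = 1 := by rw [← hz]; exact pow_orderOf_eq_one z
    have h2 := congrArg SemidirectProduct.rightHom this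
    rw [map_pow, map_one] at h2
    simpa [SemidirectProduct.rightHom_eq_right] using h2
  have hva : v ^ p ^ a = 1 := (hviff _).mpr (hφ_dvd _ hφpa)
  have hdvd1 : orderOf v ∣ p ^ a := orderOf_dvd_of_pow_eq_one hva
  have hdvd2 : orderOf v ∣ p ^ (e - 1) * (p - 1) := by
    have h1 : orderOf v ∣ Fintype.card (ZMod (p ^ e))ˣ := orderOf_dvd_card
    rwa [ZMod.card_units_eq_totient, Nat.totient_prime_pow hp he] at h1
  obtain ⟨b, hb, hbe⟩ := (Nat.dvd_prime_pow hp).mp hdvd1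
  have hcop : Nat.Coprime (p ^ b) (p - 1) := by
    refine Nat.Coprime.pow_left b ?_
    have h2 := hp.two_le
    obtain ⟨q, hq⟩ : ∃ q, p = q + 1 := ⟨p - 1, by omega⟩
    subst hq
    simpa [Nat.Coprime, Nat.add_sub_cancel] using Nat.gcd_self_add_left q 1
  have hdvd3 : orderOf v ∣ p ^ (e - 1) := by
    rw [hbe] at hdvd2 ⊢
    exact hcop.dvd_of_dvd_mul_right hdvd2
  have hve : v ^ p ^ (e - 1) = 1 := orderOf_dvd_iff_pow_eq_one.mp hdvd3
  have hφe : φ ^ p ^ (e - 1) = 1 := hφ_one _ ((hviff _).mp hve)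
  have hu1 : (p : ℤ) ∣ u - 1 := by
    refine dvdSubOne p hp u (e - 1) ?_
    refine dvd_trans ?_ (hφ_dvd _ hφe)
    exact dvd_pow_self (p : ℤ) (by omega)
  -- the left component computation
  obtain ⟨c, hc⟩ := Subgroup.mem_zpowers_iff.mp (hg z.left)
  have hleft : ∀ k : ℕ, (z ^ k).left = g ^ (c * ∑ i ∈ range k, u ^ i) := by
    intro k
    induction k with
    | zero => simp
    | succ k ih =>
      have hr : (z ^ k).right = φ ^ k := by
        have := map_pow SemidirectProduct.rightHom z k
        simpa [SemidirectProduct.rightHom_eq_right] using this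
      rw [pow_succ, SemidirectProduct.mul_left, ih, hr]
      simp only [MonoidHom.id_apply]
      rw [← hc, hφk, ← zpow_add]
      congr 1
      rw [Finset.sum_range_succ]
      ring
  constructor
  · -- z ^ p^e = 1
    have hre : p ^ (e - 1) * p = p ^ e := by
      rw [← pow_succ]
      congr 1
      omega
    refine SemidirectProduct.ext ?_ ?_
    · rw [hleft]
      show g ^ _ = (1 : Hol N).left
      rw [SemidirectProduct.one_left]
      refine hgpow _ ?_
      exact Dvd.dvd.mul_left (keyDvd p u hu1 e) c
    · show (z ^ p ^ e).right = (1 : Hol N).right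
      rw [SemidirectProduct.one_right]
      have h2 : (z ^ p ^ e).right = φ ^ p ^ e := by
        have := map_pow SemidirectProduct.rightHom z (p ^ e)
        simpa [SemidirectProduct.rightHom_eq_right] using this
      rw [h2, ← hre, pow_mul, hφe, one_pow]
  · have h2 : SemidirectProduct.rightHom (z ^ p ^ (e - 1)) = φ ^ p ^ (e - 1) := by
      simpa [SemidirectProduct.rightHom_eq_right] using
        map_pow SemidirectProduct.rightHom z (p ^ (e - 1))
    rw [h2, hφe]

private lemma memOfSmall {N : Type*} [Group N] [IsCyclic N] [Fintype N] (p e : ℕ)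
    (hp : p.Prime) (hcard : Nat.card N = p ^ e) (H : Subgroup (Hol N))
    (hcap : p ≤ Nat.card ↥(H ⊓ (SemidirectProduct.inl : N →* Hol N).range))
    (ζ : Hol N) (h1 : SemidirectProduct.rightHom ζ = 1) (h2 : ζ ^ p = 1) : ζ ∈ H := by
  classical
  haveI : Fact p.Prime := ⟨hp⟩
  have hζr : ζ ∈ (SemidirectProduct.inl : N →* Hol N).range := by
    rw [SemidirectProduct.range_inl_eq_ker_rightHom]
    exact h1
  obtain ⟨s, rfl⟩ := hζr
  have hs : s ^ p = 1 := by
    apply SemidirectProduct.inl_injective (φ := MonoidHom.id (MulAut N))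
    rw [map_pow, map_one]
    exact h2
  -- the subgroup K of N corresponding to H ⊓ range inl
  set K : Subgroup N := (H ⊓ (SemidirectProduct.inl : N →* Hol N).range).comap
    (SemidirectProduct.inl : N →* Hol N) with hK
  have hmap : K.map (SemidirectProduct.inl : N →* Hol N)
      = H ⊓ (SemidirectProduct.inl : N →* Hol N).range := by
    rw [hK, Subgroup.map_comap_eq]
    rw [inf_comm]
    rw [inf_assoc, inf_idem]
  have hcardK : p ≤ Nat.card K := by
    have := Nat.card_congr (K.equivMapOfInjective _
      (SemidirectProduct.inl_injective (φ := MonoidHom.id (MulAut N)))).toEquiv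
    rw [hmap] at this
    exact hcap.trans_eq this.symm
  have hpdvd : p ∣ Fintype.card K := by
    have hd : Nat.card K ∣ p ^ e := by
      rw [← hcard]
      exact Subgroup.card_subgroup_dvd_card K
    obtain ⟨j, hj, hje⟩ := (Nat.dvd_prime_pow hp).mp hd
    have hj1 : 1 ≤ j := by
      rcases Nat.eq_zero_or_pos j with rfl | h
      · rw [pow_zero] at hje
        have := hp.two_le
        omega
      · exact h
    rw [← Nat.card_eq_fintype_card, hje]
    exact dvd_pow_self p (by omega)
  obtain ⟨t, ht⟩ := exists_prime_orderOf_dvd_card p hpdvd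
  have ht' : orderOf (t : N) = p := by
    have h0 := (orderOf_injective K.subtype K.subtype_injective t).trans ht
    simpa using h0
  -- s is in zpowers of t
  have hsub : (Subgroup.zpowers (t : N) : Set N).toFinset
      ⊆ Finset.univ.filter (fun x : N => x ^ p = 1) := by
    intro x hx
    rw [Set.mem_toFinset] at hx
    obtain ⟨k, hk⟩ := Subgroup.mem_zpowers_iff.mp hx
    rw [Finset.mem_filter]
    refine ⟨Finset.mem_univ x, ?_⟩
    rw [← hk, ← zpow_natCast, ← zpow_mul, mul_comm, zpow_mul, zpow_natCast,
      ← ht', pow_orderOf_eq_one, one_zpow]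
  have hcards : (Finset.univ.filter (fun x : N => x ^ p = 1)).card
      ≤ ((Subgroup.zpowers (t : N) : Set N).toFinset).card := by
    have hc1 : ((Subgroup.zpowers (t : N) : Set N).toFinset).card = p := by
      rw [Set.toFinset_card, ← Nat.card_eq_fintype_card]
      show Nat.card (Subgroup.zpowers (t : N)) = p
      rw [Nat.card_zpowers, ht']
    rw [hc1]
    exact IsCyclic.card_pow_eq_one_le hp.pos
  have heq := Finset.eq_of_subset_of_card_le hsub hcards
  have hsmem : s ∈ Subgroup.zpowers (t : N) := by
    have : s ∈ Finset.univ.filter (fun x : N => x ^ p = 1) :=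
      Finset.mem_filter.mpr ⟨Finset.mem_univ s, hs⟩
    rw [← heq, Set.mem_toFinset] at this
    exact this
  obtain ⟨k, hk⟩ := Subgroup.mem_zpowers_iff.mp hsmem
  have htH : (SemidirectProduct.inl : N →* Hol N) (t : N) ∈ H := by
    have hmem : (SemidirectProduct.inl : N →* Hol N) (t : N)
        ∈ H ⊓ (SemidirectProduct.inl : N →* Hol N).range := by
      rw [← hmap]
      exact Subgroup.mem_map_of_mem _ t.2
    exact hmem.1
  rw [← hk, map_zpow]
  exact Subgroup.zpow_mem H htH k

/-- Let `N` be cyclic of order `p^e`, `H ≤ G ≤ Hol(N)`, and let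
`C = Core_G(H)` be the largest normal subgroup of `G` contained in `H`. If
`|H ∩ N| ≥ p` (with `N` identified with its image in `Hol(N)`), then `G/C` has no
element of order `p^e`. -/
theorem quotient_core_no_full_order {N : Type*} [Group N]
    (p e : ℕ) (hp : p.Prime) (he : 1 ≤ e) (he2 : p = 2 → 2 ≤ e)
    [IsCyclic N] (hcard : Nat.card N = p ^ e)
    (G H : Subgroup (Hol N)) (hHG : H ≤ G)
    (hcap : p ≤ Nat.card ↥(H ⊓ (SemidirectProduct.inl : N →* Hol N).range)) :
    ∀ x : G ⧸ (H.subgroupOf G).normalCore, orderOf x ≠ p ^ e := by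
  classical
  haveI : Finite N := Nat.finite_of_card_ne_zero (by
    rw [hcard]; exact pow_ne_zero e hp.pos.ne')
  haveI : Fintype N := Fintype.ofFinite N
  haveI : Finite (Hol N) := holFinite_s14
  intro x hx
  obtain ⟨y, rfl⟩ := QuotientGroup.mk_surjective x
  set C := (H.subgroupOf G).normalCore with hC
  set n := orderOf y with hn
  have hn0 : n ≠ 0 := by
    have : 0 < orderOf y := orderOf_pos y
    omega
  set m := n / p ^ n.factorization p with hm
  set a := n.factorization p with ha
  have hnm : p ^ a * m = n := Nat.ordProj_mul_ordCompl_eq_self n p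
  have hcop : p.Coprime m := Nat.coprime_ordCompl hp hn0
  have hdvdn : p ^ e ∣ n := by
    have h0 := orderOf_map_dvd (QuotientGroup.mk' C) y
    rw [QuotientGroup.mk'_apply, hx] at h0
    exact h0
  have hea : e ≤ a := (hp.pow_dvd_iff_le_factorization hn0).mp hdvdn
  have hm0 : 0 < m := by
    refine Nat.pos_of_ne_zero fun h0 => ?_
    rw [h0, Nat.mul_zero] at hnm
    omega
  have hordy' : orderOf (y ^ m) = p ^ a := by
    rw [orderOf_pow]
    have hmn : m ∣ n := Nat.ordCompl_dvd n p
    rw [← hn, Nat.gcd_eq_right hmn, ← hnm, Nat.mul_div_cancel _ hm0]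
  have hordz : orderOf ((y ^ m : G) : Hol N) = p ^ a := by
    rw [← hordy']
    simpa using orderOf_injective G.subtype G.subtype_injective (y ^ m)
  obtain ⟨hz1, hz2⟩ := holPow p e hp he hcard _ a hordz
  have hre : p ^ (e - 1) * p = p ^ e := by
    rw [← pow_succ]
    congr 1
    omega
  -- the element (y^m)^(p^(e-1)) lies in the normal core
  have hwC : (y ^ m) ^ p ^ (e - 1) ∈ C := by
    have hmemcore : ∀ b : G, b * ((y ^ m) ^ p ^ (e - 1)) * b⁻¹ ∈ H.subgroupOf G := by
      intro b
      rw [Subgroup.mem_subgroupOf]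
      have hcoe : ((b * ((y ^ m) ^ p ^ (e - 1)) * b⁻¹ : G) : Hol N)
          = (b : Hol N) * (((y ^ m : G) : Hol N)) ^ p ^ (e - 1) * (b : Hol N)⁻¹ := by
        push_cast
        rfl
      rw [hcoe]
      refine memOfSmall p e hp hcard H hcap _ ?_ ?_
      · rw [map_mul, map_mul, map_inv, hz2, mul_one, mul_inv_cancel]
      · rw [conj_pow, ← pow_mul, hre, hz1, mul_one, mul_inv_cancel]
    exact hmemcore
  have hone : ((y : G ⧸ C)) ^ (m * p ^ (e - 1)) = 1 := by
    rw [pow_mul, ← QuotientGroup.mk_pow, ← QuotientGroup.mk_pow]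
    exact (QuotientGroup.eq_one_iff _).mpr hwC
  have hdvd : p ^ e ∣ m * p ^ (e - 1) := by
    rw [← hx]
    exact orderOf_dvd_of_pow_eq_one hone
  have hdvd2 : p ^ e ∣ p ^ (e - 1) :=
    (Nat.Coprime.pow_left e hcop).dvd_of_dvd_mul_left hdvd
  have := (Nat.pow_dvd_pow_iff_le_right hp.one_lt).mp hdvd2
  omega
end

section
/- Let N be cyclic of order 2^e (e ≥ 2) with generator σ. Let G be a transitive, non-regular subgroup of Hol(N). Then the centre Z(G) contains σ^{2^{e-1}} and Z(G) is cyclic. -/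
/-- A transitive subgroup is regular if the stabiliser of `1_N` in it is trivial. -/
def IsRegularSub {N : Type*} [Group N] (G : Subgroup (Hol N)) : Prop :=
  IsTransitiveSub G ∧ ∀ g ∈ G, holAct g 1 = 1 → g = 1

/-!
Since `|Hol(N)| = 2^e · 2^(e-1)`, the group `G` is a 2-group, nontrivial because it is not
regular, so `Z(G) ≠ 1`. Write elements of `Hol(N)` as `(σ^j, x ↦ x^a)` with `a` odd. A central
involution `u` of `G` commutes with a nontrivial stabiliser element `(1, x ↦ x^b)` and with some
`(σ, x ↦ x^c)` (transitivity); together with `u² = 1` the resulting congruences modulo `2^e` force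
`a ≡ 1`, and then `u = σ^(2^(e-1))`. So `Z(G)` is an abelian 2-group with a unique involution,
namely `σ^(2^(e-1))`, and such a group is cyclic.
-/

/-- The hypotheses are the congruences satisfied by an involution `(σ^j, x ↦ x^a)` commuting with `(1, x ↦ x^b)`
and `(σ, x ↦ x^c)` in the holomorph of a cyclic group of order `2^e`. -/
theorem Int.two_pow_dvd_sub_one_of_dvd {e : ℕ} (he : 2 ≤ e) {a b c j : ℤ} (hc : Odd c)
    (hb : ¬ 2 ^ e ∣ b - 1) (h_sq : 2 ^ e ∣ j * (a + 1)) (h_b : 2 ^ e ∣ j * (b - 1))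
    (h_c : 2 ^ e ∣ a - 1 - j * (c - 1)) : 2 ^ e ∣ a - 1 := by
  have h4 : (4 : ℤ) ∣ 2 ^ e := by
    simpa using pow_dvd_pow (2 : ℤ) he
  obtain ⟨c', rfl⟩ := hc
  by_cases ha : (4 : ℤ) ∣ a - 1
  · obtain ⟨v, hv⟩ : (2 : ℤ) ∣ a + 1 := by omega
    have hv_odd : ¬ (2 : ℤ) ∣ v := by omega
    have hsplit : (2 : ℤ) ^ e = 2 ^ (e - 1) * 2 := by
      rw [← pow_succ, Nat.sub_add_cancel (by omega)]
    have hj : (2 : ℤ) ^ (e - 1) ∣ j := by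
      refine Int.prime_two.pow_dvd_of_dvd_mul_right _ hv_odd ?_
      rw [← mul_dvd_mul_iff_right two_ne_zero, ← hsplit, mul_assoc, mul_comm v, ← hv]
      exact h_sq
    have h_jc : 2 ^ e ∣ j * (2 * c' + 1 - 1) := by
      rw [hsplit, add_sub_cancel_right, mul_comm 2 c', ← mul_assoc]
      exact mul_dvd_mul_right (hj.mul_right c') 2
    simpa using dvd_add h_c h_jc
  · have hj : ¬ (2 : ℤ) ∣ j := by
      rintro ⟨j', rfl⟩
      have : (4 : ℤ) ∣ 2 * j' * (2 * c' + 1 - 1) := ⟨j' * c', by ring⟩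
      have := h4.trans h_c
      omega
    exact absurd (Int.prime_two.pow_dvd_of_dvd_mul_left _ hj h_b) hb

theorem IsCyclic.eq_of_orderOf_eq_two {N : Type*} [Group N] [IsCyclic N] [Finite N] {x y : N}
    (hx : orderOf x = 2) (hy : orderOf y = 2) : x = y := by
  classical
  have := Fintype.ofFinite N
  have h := IsCyclic.card_orderOf_eq_totient (α := N) (d := 2)
    (by rw [← hx, ← Nat.card_eq_fintype_card]; exact orderOf_dvd_natCard x)
  rw [Nat.totient_two] at h
  exact Finset.card_le_one.mp h.le x (by simp [hx]) y (by simp [hy])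

theorem MulAut.exists_odd_forall_eq_zpow {N : Type*} [Group N] [IsCyclic N] {τ : N}
    (hτ : orderOf τ = 2) (φ : MulAut N) : ∃ a : ℤ, Odd a ∧ ∀ x, φ x = x ^ a := by
  obtain ⟨a, ha⟩ := MonoidHom.map_cyclic (φ : N →* N)
  refine ⟨a, Int.not_even_iff_odd.mp fun ⟨k, hk⟩ => ?_, ha⟩
  have hτ1 : τ ≠ 1 := by rintro rfl; simp at hτ
  have : φ τ = 1 := by
    rw [show φ τ = τ ^ a from ha τ, hk, ← two_mul, zpow_mul, zpow_two, ← sq, ← hτ,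
      pow_orderOf_eq_one, one_zpow]
  exact hτ1 ((map_eq_one_iff φ φ.injective).mp this)

theorem MulAut.eq_one_of_forall_eq_zpow {N : Type*} [Group N] {φ : MulAut N} {a : ℤ}
    (hφ : ∀ x, φ x = x ^ a) (ha : (Monoid.exponent N : ℤ) ∣ a - 1) : φ = 1 := by
  ext x
  have hx : x ^ (a - 1) = 1 := orderOf_dvd_iff_zpow_eq_one.mp
    ((Int.natCast_dvd_natCast.mpr (Monoid.order_dvd_exponent x)).trans ha)
  rw [hφ, MulAut.one_apply, ← sub_add_cancel a 1, zpow_add_one, hx, one_mul]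

theorem IsPGroup.isCyclic_of_unique_subgroup_order_prime {p : ℕ} [hp : Fact p.Prime] {H : Type*}
    [CommGroup H] [Finite H] (hH : IsPGroup p H)
    (hunique : ∀ u v : H, orderOf u = p → orderOf v = p → v ∈ Subgroup.zpowers u) :
    IsCyclic H := by
  obtain ⟨z, hz⟩ := Monoid.exists_orderOf_eq_exponent (Monoid.ExponentExists.of_finite (G := H))
  refine ⟨z, fun y => show y ∈ Subgroup.zpowers z from ?_⟩
  obtain ⟨_ | k, hk⟩ := IsPGroup.iff_orderOf.mp hH z
  · have hy : y = 1 := by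
      rw [← orderOf_eq_one_iff, ← Nat.dvd_one, ← pow_zero p, ← hk, hz]
      exact Monoid.order_dvd_exponent y
    exact hy ▸ Subgroup.one_mem _
  have hpow_z : ∀ x : H, x ^ p ^ (k + 1) = 1 := fun x => by
    rw [← hk, hz]; exact Monoid.pow_exponent_eq_one x
  have hroot : ∀ u : H, u ^ p = 1 → u ∈ Subgroup.zpowers z := by
    intro u hu
    rcases eq_or_ne u 1 with rfl | hu1
    · exact Subgroup.one_mem _
    have hzp : orderOf (z ^ p ^ k) = p := by
      refine orderOf_eq_prime (by rw [← pow_mul, ← pow_succ, hpow_z]) ?_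
      exact pow_ne_one_of_lt_orderOf (pow_ne_zero _ hp.out.ne_zero)
        (hk ▸ Nat.pow_lt_pow_right hp.out.one_lt k.lt_succ_self)
    exact Subgroup.zpowers_le.mpr (Subgroup.npow_mem_zpowers z _)
      (hunique _ u hzp (orderOf_eq_prime hu hu1))
  -- If `y ^ p = z ^ i`, maximality of `orderOf z` forces `p ∣ i`, so `y` is a `p`-th root of
  -- unity times a power of `z`.
  obtain ⟨m, hm⟩ := hH y
  induction m generalizing y with
  | zero => exact (pow_one y ▸ hm) ▸ Subgroup.one_mem _
  | succ m ih =>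
    obtain ⟨i, hi⟩ := Subgroup.mem_zpowers_iff.mp
      (ih (y ^ p) (by rw [← pow_mul, ← pow_succ']; exact hm))
    obtain ⟨i', rfl⟩ : (p : ℤ) ∣ i := by
      have : z ^ (i * (p ^ k : ℕ)) = 1 := by
        rw [zpow_mul, hi, zpow_natCast, ← pow_mul, ← pow_succ', hpow_z]
      have := orderOf_dvd_iff_zpow_eq_one.mpr this
      rw [hk, pow_succ, Nat.cast_mul, mul_comm] at this
      exact (mul_dvd_mul_iff_right (by exact_mod_cast pow_ne_zero _ hp.out.ne_zero)).mp this
    have hu : (y * z ^ (-i')) ^ p = 1 := by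
      rw [mul_pow, ← hi, ← zpow_natCast (z ^ _), ← zpow_mul, ← zpow_add]
      ring_nf; exact zpow_zero z
    simpa using Subgroup.mul_mem _ (hroot _ hu) (Subgroup.zpow_mem_zpowers z i')

namespace Hol

variable {N : Type*} [Group N]

theorem holAct_one (g : Hol N) : holAct g 1 = g.left := by
  simp [holAct]

theorem exists_left_eq_one_ne_one {G : Subgroup (Hol N)} (hG : IsTransitiveSub G)
    (hnr : ¬ IsRegularSub G) : ∃ g ∈ G, g.left = 1 ∧ g ≠ 1 := by
  simpa [IsRegularSub, hG, holAct_one] using hnr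

theorem isPGroup_two [IsCyclic N] {e : ℕ} (hcard : Nat.card N = 2 ^ e) :
    IsPGroup 2 (Hol N) := by
  have : Finite N := Nat.finite_of_card_ne_zero (by simp [hcard])
  refine IsPGroup.of_card (n := e + (e - 1)) ?_
  rw [SemidirectProduct.card, IsCyclic.card_mulAut, hcard, pow_add]
  rcases e with _ | e
  · simp
  · rw [Nat.totient_prime_pow_succ Nat.prime_two]; simp

theorem eq_inl_of_orderOf_eq_two {e : ℕ} (he : 2 ≤ e) {σ : N}
    (hgen : ∀ x : N, x ∈ Subgroup.zpowers σ) (hcard : Nat.card N = 2 ^ e) {u g₀ g₁ : Hol N}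
    (hu : orderOf u = 2) (hg₀ : g₀.left = 1) (hg₀_ne : g₀ ≠ 1) (hg₁ : g₁.left = σ)
    (hu₀ : Commute u g₀) (hu₁ : Commute u g₁) :
    u = SemidirectProduct.inl (σ ^ 2 ^ (e - 1)) := by
  have : Finite N := Nat.finite_of_card_ne_zero (by simp [hcard])
  have : IsCyclic N := ⟨σ, hgen⟩
  have hσ : orderOf σ = 2 ^ e := (orderOf_eq_card_of_forall_mem_zpowers hgen).trans hcard
  have hexp : (Monoid.exponent N : ℤ) = 2 ^ e := by
    rw [IsCyclic.exponent_eq_card, hcard]; push_cast; rfl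
  have hτ : orderOf (σ ^ 2 ^ (e - 1)) = 2 := by
    rw [orderOf_pow_of_dvd (by positivity) (hσ ▸ pow_dvd_pow 2 (Nat.sub_le e 1)), hσ,
      Nat.pow_div (Nat.sub_le e 1) two_pos, Nat.sub_sub_self (by omega), pow_one]
  have hσ_eq : ∀ m n : ℤ, σ ^ m = σ ^ n → 2 ^ e ∣ m - n := fun m n h => by
    simpa [hσ] using Int.modEq_iff_dvd.mp (zpow_eq_zpow_iff_modEq.mp h).symm
  obtain ⟨a, -, ha⟩ := MulAut.exists_odd_forall_eq_zpow hτ u.right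
  obtain ⟨b, -, hb⟩ := MulAut.exists_odd_forall_eq_zpow hτ g₀.right
  obtain ⟨c, hc, hc'⟩ := MulAut.exists_odd_forall_eq_zpow hτ g₁.right
  obtain ⟨j, hj⟩ := Subgroup.mem_zpowers_iff.mp (hgen u.left)
  have h_sq : 2 ^ e ∣ j * (a + 1) := by
    have h := congrArg SemidirectProduct.left (pow_orderOf_eq_one u)
    rw [hu, sq] at h
    simp only [SemidirectProduct.mul_left, MonoidHom.id_apply, SemidirectProduct.one_left, ha,
      ← hj, ← zpow_mul, ← zpow_add] at h
    convert hσ_eq _ 0 (h.trans (zpow_zero σ).symm) using 1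
    ring
  have h_b : 2 ^ e ∣ j * (b - 1) := by
    have h := congrArg SemidirectProduct.left hu₀.eq
    simp only [SemidirectProduct.mul_left, MonoidHom.id_apply, hg₀, map_one, hb, ← hj,
      mul_one, one_mul, ← zpow_mul] at h
    convert hσ_eq _ _ h.symm using 1
    ring
  have h_c : 2 ^ e ∣ a - 1 - j * (c - 1) := by
    have h := congrArg SemidirectProduct.left hu₁.eq
    simp only [SemidirectProduct.mul_left, MonoidHom.id_apply, hg₁, ha, hc', ← hj] at h
    rw [← zpow_mul, ← zpow_add, ← zpow_one_add] at h
    convert hσ_eq _ _ h using 1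
    ring
  have hb1 : ¬ 2 ^ e ∣ b - 1 := fun h =>
    hg₀_ne (SemidirectProduct.ext hg₀ (MulAut.eq_one_of_forall_eq_zpow hb (hexp ▸ h)))
  have hu_right : u.right = 1 := MulAut.eq_one_of_forall_eq_zpow ha
    (hexp ▸ Int.two_pow_dvd_sub_one_of_dvd he hc hb1 h_sq h_b h_c)
  have hu_inl : u = SemidirectProduct.inl u.left := SemidirectProduct.ext rfl hu_right
  rw [hu_inl, orderOf_injective _ SemidirectProduct.inl_injective] at hu
  rw [hu_inl, IsCyclic.eq_of_orderOf_eq_two hu hτ]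

theorem coe_eq_inl_of_mem_center {e : ℕ} (he : 2 ≤ e) {σ : N}
    (hgen : ∀ x : N, x ∈ Subgroup.zpowers σ) (hcard : Nat.card N = 2 ^ e)
    {G : Subgroup (Hol N)} (hG : IsTransitiveSub G) (hnr : ¬ IsRegularSub G)
    (u : Subgroup.center G) (hu : orderOf u = 2) :
    ((u : G) : Hol N) = SemidirectProduct.inl (σ ^ 2 ^ (e - 1)) := by
  obtain ⟨g₀, hg₀G, hg₀, hg₀_ne⟩ := exists_left_eq_one_ne_one hG hnr
  obtain ⟨g₁, hg₁G, hg₁⟩ := hG 1 σ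
  have hcomm : ∀ g ∈ G, Commute ((u : G) : Hol N) g := fun g hg =>
    congrArg Subtype.val (Subgroup.mem_center_iff.mp u.2 ⟨g, hg⟩).symm
  exact eq_inl_of_orderOf_eq_two he hgen hcard
    ((Subgroup.orderOf_coe _).trans ((Subgroup.orderOf_coe _).trans hu))
    hg₀ hg₀_ne (holAct_one g₁ ▸ hg₁) (hcomm g₀ hg₀G) (hcomm g₁ hg₁G)

end Hol

/-- Let `N` be cyclic of order `2^e` (`e ≥ 2`) with generator `σ`,
and let `G` be a transitive non-regular subgroup of `Hol(N)`. Then `Z(G)` contains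
`σ^{2^{e-1}}` and `Z(G)` is cyclic. -/
theorem center_of_nonregular_transitive {N : Type*} [Group N]
    (e : ℕ) (he : 2 ≤ e)
    (σ : N) (hgen : ∀ x : N, x ∈ Subgroup.zpowers σ) (hcard : Nat.card N = 2 ^ e)
    (G : Subgroup (Hol N)) (hG : IsTransitiveSub G) (hnr : ¬ IsRegularSub G) :
    (∃ hmem : (SemidirectProduct.inl (σ ^ 2 ^ (e - 1)) : Hol N) ∈ G,
        (⟨SemidirectProduct.inl (σ ^ 2 ^ (e - 1)), hmem⟩ : G) ∈
          Subgroup.center G) ∧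
      IsCyclic ↥(Subgroup.center ↥G) := by
  have : Finite N := Nat.finite_of_card_ne_zero (by simp [hcard])
  have : IsCyclic N := ⟨σ, hgen⟩
  have : Finite (Hol N) := Finite.of_equiv _ SemidirectProduct.equivProd.symm
  have hinvol := Hol.coe_eq_inl_of_mem_center he hgen hcard hG hnr
  have hG2 : IsPGroup 2 G := (Hol.isPGroup_two hcard).to_subgroup G
  have : Nontrivial G := by
    obtain ⟨g₀, hg₀G, -, hg₀_ne⟩ := Hol.exists_left_eq_one_ne_one hG hnr
    exact ⟨⟨g₀, hg₀G⟩, 1, fun h => hg₀_ne (congrArg Subtype.val h)⟩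
  have : Nontrivial (Subgroup.center G) := hG2.center_nontrivial
  obtain ⟨n, hn, hZcard⟩ := (hG2.to_subgroup (Subgroup.center G)).nontrivial_iff_card.mp ‹_›
  obtain ⟨w, hw⟩ := exists_prime_orderOf_dvd_card' 2 (hZcard ▸ dvd_pow_self 2 hn.ne')
  refine ⟨⟨hinvol w hw ▸ (w : G).2, ?_⟩, ?_⟩
  · convert w.2
    exact (hinvol w hw).symm
  · open scoped IsMulCommutative in
    exact (hG2.to_subgroup _).isCyclic_of_unique_subgroup_order_prime fun u v hu hv => by
      rw [Subtype.ext (Subtype.ext ((hinvol v hv).trans (hinvol u hu).symm))]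
      exact Subgroup.mem_zpowers u
end
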